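/- arXiv:1306.2845 — 9 statements merged into one kernel-verified Lean document; each statement's English description precedes it below -/
import Mathlib

section
/- For every n ≥ 3 and every n×n invertible upper triangular (0,1)-matrix A, the sum of the entries of A⁻¹ is at most 2 + F_{n-1}, where F denotes the Fibonacci sequence with F_1 = F_2 = 1. -/
/-!
Let `x = A⁻¹ e` be the vector of row sums of `A⁻¹`. Reading `A x = e` row by row,
`x i = 1 - ∑ j ∈ T i, x j` for a set `T i` of indices above `i`. For a tail `{i, …, n}` of
length `j`, let `P` and `N` be the sums of the positive and negative parts of `x` over it; then
`∑ j ∈ T i, x j` lies between `-N` and `P` of the tail starting at `i + 1`, and a downward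
induction on the tails propagates the Fibonacci bounds `P + N ≤ F_{j+1}`, `P ≤ F_j + 1`,
`N + 1 ≤ F_j` and `P - N ≤ F_{j-1} + 2`. The last one, for the full tail, is the theorem,
since `S(A⁻¹) = P - N`.
-/

open Finset Matrix

variable {K : Type*} [CommRing K] [LinearOrder K] [IsStrictOrderedRing K]

section Arithmetic

structure FibMassBound (j : ℕ) (P N : K) : Prop where
  add_le : P + N ≤ Nat.fib (j + 1)
  le_fib_add_one : P ≤ Nat.fib j + 1
  add_one_le : N + 1 ≤ Nat.fib j
  sub_le : P - N ≤ Nat.fib (j - 1) + 2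

namespace FibMassBound

theorem one_zero : FibMassBound 1 (1 : K) 0 := by
  constructor <;> norm_num

theorem step {j : ℕ} {P N t : K} (h : FibMassBound j P N) (hN : -N ≤ t) (hP : t ≤ P) :
    FibMassBound (j + 1) (P + (1 - t)⁺) (N + (1 - t)⁻) := by
  have hfib : (Nat.fib (j + 2) : K) = Nat.fib j + Nat.fib (j + 1) := by
    exact_mod_cast Nat.fib_add_two
  have hmono : (Nat.fib j : K) ≤ Nat.fib (j + 1) := by exact_mod_cast Nat.fib_mono j.le_succ
  have hmono' : (Nat.fib (j - 1) : K) ≤ Nat.fib j := by exact_mod_cast Nat.fib_mono (j.sub_le 1)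
  obtain ⟨h₁, h₂, h₃, h₄⟩ := h
  rcases le_total 0 (1 - t) with hx | hx
  · rw [posPart_eq_self.2 hx, negPart_eq_zero.2 hx]
    exact ⟨by linarith, by linarith, by linarith, by rw [Nat.add_sub_cancel]; linarith⟩
  · rw [posPart_eq_zero.2 hx, negPart_eq_neg.2 hx]
    exact ⟨by linarith, by linarith, by linarith, by rw [Nat.add_sub_cancel]; linarith⟩

end FibMassBound

variable {ι : Type*} (x : ι → K) {s T : Finset ι}

theorem sum_le_sum_posPart_of_subset (h : T ⊆ s) : ∑ j ∈ T, x j ≤ ∑ j ∈ s, (x j)⁺ :=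
  (sum_le_sum fun j _ => le_posPart (x j)).trans
    (sum_le_sum_of_subset_of_nonneg h fun j _ _ => posPart_nonneg (x j))

theorem neg_sum_negPart_le_sum_of_subset (h : T ⊆ s) : -∑ j ∈ s, (x j)⁻ ≤ ∑ j ∈ T, x j := by
  simpa [sum_neg_distrib, neg_le] using sum_le_sum_posPart_of_subset (-x) h

end Arithmetic

section Recurrence

variable {ι : Type*} [LinearOrder ι] {x : ι → K} {T : ι → Finset ι}

theorem fibMassBound_of_forall_subset (hT : ∀ i, ∀ j ∈ T i, i < j)
    (hx : ∀ i, x i + ∑ j ∈ T i, x j = 1) (s : Finset ι) (hs : s.Nonempty)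
    (hclosed : ∀ i ∈ s, T i ⊆ s) :
    FibMassBound #s (∑ i ∈ s, (x i)⁺) (∑ i ∈ s, (x i)⁻) := by
  induction s using Finset.induction_on_min with
  | empty => exact absurd hs not_nonempty_empty
  | insert a s ha ih =>
    have has : a ∉ s := fun h => lt_irrefl a (ha a h)
    have hTs : ∀ i ∈ insert a s, T i ⊆ s := fun i hi =>
      (subset_insert_iff_of_notMem fun haT => (hT i a haT).not_ge <| by
        rcases mem_insert.1 hi with rfl | hi
        exacts [le_rfl, (ha i hi).le]).1 (hclosed i hi)
    have hxa : x a = 1 - ∑ j ∈ T a, x j := eq_sub_of_add_eq (hx a)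
    rw [card_insert_of_notMem has, sum_insert has, sum_insert has, hxa, add_comm (_⁺),
      add_comm (_⁻)]
    rcases s.eq_empty_or_nonempty with rfl | hs'
    · simpa [subset_empty.1 (hTs a (mem_insert_self a ∅))] using FibMassBound.one_zero
    · exact (ih hs' fun i hi => hTs i (mem_insert_of_mem hi)).step
        (neg_sum_negPart_le_sum_of_subset x (hTs a (mem_insert_self a s)))
        (sum_le_sum_posPart_of_subset x (hTs a (mem_insert_self a s)))

theorem sum_le_fib_card_sub_one_add_two [Fintype ι] (hT : ∀ i, ∀ j ∈ T i, i < j)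
    (hx : ∀ i, x i + ∑ j ∈ T i, x j = 1) :
    ∑ i, x i ≤ Nat.fib (Fintype.card ι - 1) + 2 := by
  rcases (univ : Finset ι).eq_empty_or_nonempty with h | h
  · rw [h, sum_empty]; positivity
  · have := (fibMassBound_of_forall_subset hT hx univ h fun i _ => subset_univ _).sub_le
    simpa only [← sum_sub_distrib, card_univ, posPart_sub_negPart] using this

end Recurrence

namespace Matrix

theorem mulVec_apply_eq_add_sum_filter {R ι : Type*} [Semiring R] [DecidableEq R] [Fintype ι]
    [LinearOrder ι] {A : Matrix ι ι R} (hA : A.IsUpperTriangular) (hdiag : ∀ i, A i i = 1)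
    (h01 : ∀ i j, A i j = 0 ∨ A i j = 1) (x : ι → R) (i : ι) :
    (A *ᵥ x) i = x i + ∑ j ∈ univ.filter (fun j => i < j ∧ A i j = 1), x j := by
  have hentry (j : ι) :
      A i j * x j = (if i = j then x j else 0) + if i < j ∧ A i j = 1 then x j else 0 := by
    rcases lt_trichotomy j i with hji | rfl | hij
    · simp [hA hji, hji.ne', hji.not_gt]
    · simp [hdiag]
    · rcases h01 i j with h | h
      · simpa [h, hij, hij.ne] using fun h10 => (eq_zero_of_zero_eq_one h10 (x j)).symm
      · simp [h, hij, hij.ne]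
  rw [mulVec, dotProduct, sum_congr rfl fun j _ => hentry j, sum_add_distrib, sum_ite_eq,
    if_pos (mem_univ i), sum_filter]

end Matrix

theorem stmt_1_general (n : ℕ) (A : Matrix (Fin n) (Fin n) ℚ)
    (hut : ∀ i j : Fin n, (j : ℕ) < (i : ℕ) → A i j = 0)
    (hdiag : ∀ i : Fin n, A i i = 1)
    (h01 : ∀ i j : Fin n, A i j = 0 ∨ A i j = 1) :
    ∑ i : Fin n, ∑ j : Fin n, A⁻¹ i j ≤ 2 + (Nat.fib (n - 1) : ℚ) := by
  have hA : A.IsUpperTriangular := fun i j hij => hut i j hij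
  have hdet : IsUnit A.det := by simp [det_of_isUpperTriangular hA, hdiag]
  have hrows : A *ᵥ (A⁻¹ *ᵥ 1) = 1 := by rw [mulVec_mulVec, mul_nonsing_inv A hdet, one_mulVec]
  have key := sum_le_fib_card_sub_one_add_two (x := A⁻¹ *ᵥ 1)
    (T := fun i => univ.filter fun j => i < j ∧ A i j = 1) (fun i j hj => (mem_filter.1 hj).2.1)
    fun i => by rw [← mulVec_apply_eq_add_sum_filter hA hdiag h01, hrows, Pi.one_apply]
  simpa [mulVec, dotProduct, add_comm] using key

/-- For n ≥ 3 and A an n×n invertible upper triangular (0,1)-matrix,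
S(A⁻¹) ≤ 2 + F_{n-1}. -/
theorem stmt_1 (n : ℕ) (hn : 3 ≤ n) (A : Matrix (Fin n) (Fin n) ℚ)
    (hut : ∀ i j : Fin n, (j : ℕ) < (i : ℕ) → A i j = 0)
    (hdiag : ∀ i : Fin n, A i i = 1)
    (h01 : ∀ i j : Fin n, A i j = 0 ∨ A i j = 1) :
    ∑ i : Fin n, ∑ j : Fin n, A⁻¹ i j ≤ 2 + (Nat.fib (n - 1) : ℚ) :=
  stmt_1_general n A hut hdiag h01
end

section
/- For every n ≥ 3 and every n×n invertible upper triangular (0,1)-matrix A, the sum of the entries of A⁻¹ is at least 2 − F_{n-1}. -/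
/-!
Put `x = A⁻¹ 𝟙`, so that `S(A⁻¹) = ∑ xᵢ` and `xᵢ = 1 - ∑_{j > i} aᵢⱼ xⱼ`. For a tail of `k`
entries of `x` let `N` and `P` be the sums of their negative and positive parts. As `aᵢⱼ ∈ {0, 1}`,
the entry preceding the tail lies in `[1 - P, 1 + N]`, and this propagates the bounds
`N + 1 ≤ F_k`, `P ≤ F_k + 1`, `N + P ≤ F_{k+1}` down the tail. For the tail `x₁, …, x_{n-1}` this
gives `S(A⁻¹) = x₀ + P - N ≥ (1 - P) + P - N = 1 - N ≥ 2 - F_{n-1}`.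
-/

open Finset Matrix

section FibBounds

variable {R : Type*} [CommRing R] [LinearOrder R] [IsStrictOrderedRing R]

def FibBounded (k : ℕ) (N P : R) : Prop :=
  N + 1 ≤ Nat.fib k ∧ P ≤ Nat.fib k + 1 ∧ N + P ≤ Nat.fib (k + 1)

lemma fibBounded_one_zero_one : FibBounded 1 (0 : R) 1 := by
  norm_num [FibBounded]

lemma FibBounded.add_parts {k : ℕ} {N P x : R} (h : FibBounded k N P)
    (hxP : 1 - P ≤ x) (hxN : x ≤ 1 + N) : FibBounded (k + 1) (N + x⁻) (P + x⁺) := by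
  obtain ⟨hN, hP, hNP⟩ := h
  have hfib : (Nat.fib (k + 2) : R) = Nat.fib k + Nat.fib (k + 1) := by
    exact_mod_cast Nat.fib_add_two
  have hmono : (Nat.fib k : R) ≤ Nat.fib (k + 1) := by exact_mod_cast Nat.fib_le_fib_succ
  refine (le_total 0 x).elim (fun hx => ?_) (fun hx => ?_)
  · rw [negPart_eq_zero.mpr hx, posPart_eq_self.mpr hx]
    refine ⟨?_, ?_, ?_⟩ <;> linarith
  · rw [negPart_eq_neg.mpr hx, posPart_eq_zero.mpr hx]
    refine ⟨?_, ?_, ?_⟩ <;> linarith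

end FibBounds

section ZeroOneSums

variable {R ι : Type*} [CommRing R] [LinearOrder R] [IsStrictOrderedRing R]

lemma neg_sum_negPart_le_sum_mul {T : Finset ι} {a y : ι → R} (ha : ∀ j, a j = 0 ∨ a j = 1) :
    -∑ j ∈ T, (y j)⁻ ≤ ∑ j ∈ T, a j * y j := by
  rw [← sum_neg_distrib]
  refine sum_le_sum fun j _ => ?_
  rcases ha j with h | h
  · simp [h]
  · simpa [h] using neg_le.mpr (neg_le_negPart (y j))

lemma sum_mul_le_sum_posPart {T : Finset ι} {a y : ι → R} (ha : ∀ j, a j = 0 ∨ a j = 1) :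
    ∑ j ∈ T, a j * y j ≤ ∑ j ∈ T, (y j)⁺ := by
  refine sum_le_sum fun j _ => ?_
  rcases ha j with h | h <;> simp [h, le_posPart]

end ZeroOneSums

section Unitriangular

variable {R ι : Type*} [CommRing R] [LinearOrder ι]

def IsUnitriangularSolution (a : ι → ι → R) (x : ι → R) (T : Finset ι) : Prop :=
  ∀ i ∈ T, x i + ∑ j ∈ T with i < j, a i j * x j = 1

namespace IsUnitriangularSolution

variable {a : ι → ι → R} {x : ι → R} {b : ι} {s : Finset ι}

lemma eq_one_sub_sum (hx : IsUnitriangularSolution a x (insert b s)) (hbs : ∀ j ∈ s, b < j) :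
    x b = 1 - ∑ j ∈ s, a b j * x j := by
  have hfilter : ({j ∈ insert b s | b < j} : Finset ι) = s := by
    ext j
    simp only [mem_filter, mem_insert]
    exact ⟨fun ⟨hj, hbj⟩ => hj.resolve_left hbj.ne', fun hj => ⟨.inr hj, hbs j hj⟩⟩
  rw [← hx b (mem_insert_self b s), hfilter, add_sub_cancel_right]

lemma of_insert (hx : IsUnitriangularSolution a x (insert b s)) (hbs : ∀ j ∈ s, b < j) :
    IsUnitriangularSolution a x s := by
  intro i hi
  have hfilter : ({j ∈ insert b s | i < j} : Finset ι) = {j ∈ s | i < j} := by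
    rw [filter_insert, if_neg (hbs i hi).not_gt]
  rw [← hfilter]
  exact hx i (mem_insert_of_mem hi)

section Ordered

variable [LinearOrder R] [IsStrictOrderedRing R]

lemma fibBounded (ha : ∀ i j, a i j = 0 ∨ a i j = 1) {T : Finset ι}
    (hx : IsUnitriangularSolution a x T) (hT : T.Nonempty) :
    FibBounded #T (∑ j ∈ T, (x j)⁻) (∑ j ∈ T, (x j)⁺) := by
  induction T using Finset.induction_on_min with
  | empty => exact absurd hT not_nonempty_empty
  | insert b s hbs ih =>
    have hb : b ∉ s := fun h => (hbs b h).false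
    have hxb := hx.eq_one_sub_sum hbs
    rw [card_insert_of_notMem hb, sum_insert hb, sum_insert hb]
    rcases s.eq_empty_or_nonempty with rfl | hs
    · simpa [hxb] using fibBounded_one_zero_one
    · rw [add_comm (x b)⁻, add_comm (x b)⁺]
      refine (ih (hx.of_insert hbs) hs).add_parts ?_ ?_
      · linarith [sum_mul_le_sum_posPart (T := s) (y := x) (ha b)]
      · linarith [neg_sum_negPart_le_sum_mul (T := s) (y := x) (ha b)]

lemma two_sub_fib_le_sum (ha : ∀ i j, a i j = 0 ∨ a i j = 1)
    (hx : IsUnitriangularSolution a x (insert b s)) (hbs : ∀ j ∈ s, b < j) (hs : s.Nonempty) :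
    2 - Nat.fib #s ≤ ∑ j ∈ insert b s, x j := by
  have hb : b ∉ s := fun h => (hbs b h).false
  have hsum : ∑ j ∈ s, x j = ∑ j ∈ s, (x j)⁺ - ∑ j ∈ s, (x j)⁻ := by
    simp only [← sum_sub_distrib, posPart_sub_negPart]
  rw [sum_insert hb, hsum, hx.eq_one_sub_sum hbs]
  linarith [sum_mul_le_sum_posPart (T := s) (y := x) (ha b),
    ((hx.of_insert hbs).fibBounded ha hs).1]

end Ordered

end IsUnitriangularSolution

lemma Matrix.IsUpperTriangular.isUnitriangularSolution [Fintype ι] [LocallyFiniteOrderTop ι]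
    {A : Matrix ι ι R} (hA : A.IsUpperTriangular) (hdiag : ∀ i, A i i = 1) {x : ι → R}
    (hAx : A *ᵥ x = 1) : IsUnitriangularSolution A x univ := by
  intro i _
  have hrow := congrFun hAx i
  have hlower : ∑ j ∈ Ici i, A i j * x j = ∑ j, A i j * x j :=
    sum_subset (subset_univ _) fun j _ hj => by
      rw [hA (not_le.mp (mem_Ici.not.mp hj)), zero_mul]
  rwa [Pi.one_apply, mulVec, dotProduct, ← hlower, ← Ioi_insert, sum_insert notMem_Ioi_self,
    hdiag, one_mul, ← filter_lt_eq_Ioi] at hrow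

end Unitriangular

/-- For n ≥ 3 and A an n×n invertible upper triangular (0,1)-matrix,
S(A⁻¹) ≥ 2 − F_{n-1}. -/
theorem stmt_2 (n : ℕ) (hn : 3 ≤ n) (A : Matrix (Fin n) (Fin n) ℚ)
    (hut : ∀ i j : Fin n, (j : ℕ) < (i : ℕ) → A i j = 0)
    (hdiag : ∀ i : Fin n, A i i = 1)
    (h01 : ∀ i j : Fin n, A i j = 0 ∨ A i j = 1) :
    2 - (Nat.fib (n - 1) : ℚ) ≤ ∑ i : Fin n, ∑ j : Fin n, A⁻¹ i j := by
  obtain ⟨m, rfl⟩ : ∃ m, n = m + 1 := ⟨n - 1, by omega⟩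
  have hA : A.IsUpperTriangular := fun i j h => hut i j h
  have hunit : IsUnit A.det := by simp [det_of_isUpperTriangular hA, hdiag]
  set x := A⁻¹ *ᵥ 1
  have hAx : A *ᵥ x = 1 := by rw [mulVec_mulVec, mul_nonsing_inv A hunit, one_mulVec]
  have hsum : ∑ i, ∑ j, A⁻¹ i j = ∑ i, x i := by simp [x, mulVec, dotProduct]
  have huniv : insert 0 (Ioi 0) = (univ : Finset (Fin (m + 1))) := by
    rw [Ioi_insert, ← bot_eq_zero, Ici_bot]
  have hsol := hA.isUnitriangularSolution hdiag hAx
  rw [← huniv] at hsol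
  have hbound := hsol.two_sub_fib_le_sum h01 (fun _ => mem_Ioi.mp)
    ⟨Fin.last m, mem_Ioi.mpr (by rw [Fin.lt_def, Fin.val_zero, Fin.val_last]; omega)⟩
  rwa [Fin.card_Ioi, huniv, ← hsum, Fin.val_zero, Nat.sub_zero] at hbound
end

section
/- For every n ≥ 3, there exists an n×n invertible upper triangular (0,1)-matrix A such that the sum of the entries of A⁻¹ equals 2 + F_{n-1}. -/
/-!
Colour the indices `0, …, n-1` by declaring `i` negative when `2 ≤ i ≤ n-3` and `n + i` is odd,
and let `A` be the unitriangular matrix with `A i j = 1` for `i < j` exactly when `i` and `j` have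
different colours. If `u A = 𝟙` then the entries of `A⁻¹` sum to `∑ u`. Here `u 0 = 1`,
`u i = ±F_i` (sign given by the colour) for `1 ≤ i ≤ n-2` and `u (n-1) = F_{n-2}`: each column
equation of `u A = 𝟙` is the identity `F_M = 1 + F_{M-1} + F_{M-3} + ⋯` (indices `≥ 2`), and the
same identity sums `u` to `2 + F_{n-1}`.
-/

open Finset Matrix Nat

theorem Matrix.sum_inv_apply_eq_sum_of_vecMul_eq_one {m R : Type*} [Fintype m] [DecidableEq m]
    [CommRing R] {A : Matrix m m R} (hA : IsUnit A.det) {u : m → R}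
    (hu : u ᵥ* A = fun _ => 1) : ∑ i, ∑ j, A⁻¹ i j = ∑ j, u j := by
  have hu' : u = (fun _ => 1) ᵥ* A⁻¹ := by
    rw [← hu, vecMul_vecMul, mul_nonsing_inv A hA, vecMul_one]
  rw [hu']
  simp only [vecMul, dotProduct, one_mul]
  exact Finset.sum_comm

section Coloring

def coloringMatrix (t : ℕ → Prop) [DecidablePred t] (R : Type*) [Zero R] [One R] (n : ℕ) :
    Matrix (Fin n) (Fin n) R :=
  of fun i j => if (i : ℕ) = j ∨ (i : ℕ) < j ∧ ¬(t i ↔ t j) then 1 else 0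

variable {R : Type*} {t : ℕ → Prop} [DecidablePred t] {n : ℕ}

theorem coloringMatrix_apply_of_lt [Zero R] [One R] {i j : Fin n} (h : (j : ℕ) < i) :
    coloringMatrix t R n i j = 0 :=
  if_neg (by omega)

theorem coloringMatrix_apply_self [Zero R] [One R] (i : Fin n) :
    coloringMatrix t R n i i = 1 :=
  if_pos (Or.inl rfl)

theorem coloringMatrix_apply_eq_zero_or_eq_one [Zero R] [One R] (i j : Fin n) :
    coloringMatrix t R n i j = 0 ∨ coloringMatrix t R n i j = 1 := by
  rw [coloringMatrix, of_apply]; split_ifs <;> simp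

theorem det_coloringMatrix [CommRing R] : (coloringMatrix t R n).det = 1 := by
  rw [det_of_isUpperTriangular fun i j h => coloringMatrix_apply_of_lt h]
  exact Finset.prod_eq_one fun i _ => coloringMatrix_apply_self i

theorem vecMul_coloringMatrix_apply [Semiring R] (u : ℕ → R) (j : Fin n) :
    ((fun i : Fin n => u i) ᵥ* coloringMatrix t R n) j =
      u j + ∑ i ∈ range j with ¬(t i ↔ t j), u i := by
  have hsupp : {i ∈ range n | i = (j : ℕ) ∨ i < (j : ℕ) ∧ ¬(t i ↔ t j)} =
      insert (j : ℕ) {i ∈ range j | ¬(t i ↔ t j)} := by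
    ext i
    simp only [mem_filter, mem_range, mem_insert]
    have := j.isLt
    constructor
    · rintro ⟨-, h | h⟩ <;> tauto
    · rintro (h | h) <;> refine ⟨by omega, ?_⟩ <;> tauto
  simp only [vecMul, dotProduct, coloringMatrix, of_apply, mul_ite, mul_one, mul_zero]
  rw [Fin.sum_univ_eq_sum_range (fun i => if i = j ∨ i < j ∧ ¬(t i ↔ t j) then u i else 0),
    ← sum_filter, hsupp, sum_insert (by simp)]

end Coloring

section Fibonacci

def altIndices (M : ℕ) : Finset ℕ := {i ∈ range M | 2 ≤ i ∧ (i + M) % 2 = 1}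

theorem altIndices_add_two {M : ℕ} (hM : M ≠ 0) :
    altIndices (M + 2) = insert (M + 1) (altIndices M) := by
  ext i; simp only [altIndices, mem_filter, mem_range, mem_insert]; omega

theorem sum_fib_altIndices_add_one {M : ℕ} (hM : M ≠ 0) :
    ∑ i ∈ altIndices M, fib i + 1 = fib M := by
  induction M using Nat.twoStepInduction with
  | zero => exact absurd rfl hM
  | one => rfl
  | more M ih _ =>
    rcases eq_or_ne M 0 with rfl | hM0
    · rfl
    rw [altIndices_add_two hM0, sum_insert (by simp [altIndices]), add_assoc, ih hM0,
      fib_add_two, add_comm]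

def IsNegIndex (n i : ℕ) : Prop := 2 ≤ i ∧ i + 2 < n ∧ (n + i) % 2 = 1

instance (n : ℕ) : DecidablePred (IsNegIndex n) := fun _ =>
  inferInstanceAs (Decidable (_ ∧ _ ∧ _))

def fibVec (n i : ℕ) : ℚ :=
  if i = 0 then 1 else if IsNegIndex n i then -fib i else fib (min i (n - 2))

variable {n m : ℕ}

theorem fibVec_of_isNegIndex {i : ℕ} (h : IsNegIndex n i) : fibVec n i = -fib i := by
  rw [fibVec, if_neg (by unfold IsNegIndex at h; omega), if_pos h]

theorem fibVec_of_not_isNegIndex {i : ℕ} (hi : i ≠ 0) (h : ¬IsNegIndex n i) :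
    fibVec n i = fib (min i (n - 2)) := by
  rw [fibVec, if_neg hi, if_neg h]

theorem filter_isNegIndex_range (hm : m < n) (h : ¬IsNegIndex n m) :
    {i ∈ range m | IsNegIndex n i} = altIndices (min m (n - 2)) := by
  unfold IsNegIndex at h
  ext i; simp only [altIndices, mem_filter, mem_range]; unfold IsNegIndex; omega

theorem filter_not_isNegIndex_range (hm : m < n) (h2 : 2 ≤ m) (h : (n + m) % 2 = 1) :
    {i ∈ range m | ¬IsNegIndex n i} = insert 0 (insert 1 (altIndices m)) := by
  ext i; simp only [altIndices, mem_filter, mem_range, mem_insert]; unfold IsNegIndex; omega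

theorem sum_fibVec_isNegIndex (hn : 3 ≤ n) (hm : m < n) (hm0 : m ≠ 0) (h : ¬IsNegIndex n m) :
    ∑ i ∈ range m with IsNegIndex n i, fibVec n i = 1 - fib (min m (n - 2)) := by
  have hfib := sum_fib_altIndices_add_one (M := min m (n - 2)) (by omega)
  rw [sum_congr rfl fun i hi => fibVec_of_isNegIndex (mem_filter.1 hi).2,
    filter_isNegIndex_range hm h, ← hfib]
  push_cast
  rw [sum_neg_distrib]
  ring

theorem sum_fibVec_not_isNegIndex (hm : m < n) (h2 : 2 ≤ m) (h : (n + m) % 2 = 1) :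
    ∑ i ∈ range m with ¬IsNegIndex n i, fibVec n i = 1 + fib m := by
  have hfib := sum_fib_altIndices_add_one (M := m) (by omega)
  have hmem : ∀ i ∈ altIndices m, fibVec n i = fib i := fun i hi => by
    simp only [altIndices, mem_filter, mem_range] at hi
    rw [fibVec_of_not_isNegIndex (by omega) (by unfold IsNegIndex; omega),
      min_eq_left (by omega)]
  rw [filter_not_isNegIndex_range hm h2 h, sum_insert (by simp [altIndices]),
    sum_insert (by simp [altIndices]), sum_congr rfl hmem, ← hfib, fibVec, if_pos rfl,
    fibVec_of_not_isNegIndex one_ne_zero (by unfold IsNegIndex; omega), min_eq_left (by omega)]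
  push_cast
  simp only [fib_one]
  ring

theorem fibVec_add_sum_of_not_iff (hn : 3 ≤ n) {j : ℕ} (hj : j < n) :
    fibVec n j + ∑ i ∈ range j with ¬(IsNegIndex n i ↔ IsNegIndex n j), fibVec n i = 1 := by
  rcases eq_or_ne j 0 with rfl | hj0
  · simp [fibVec]
  by_cases hneg : IsNegIndex n j
  · simp only [hneg, iff_true]
    rw [fibVec_of_isNegIndex hneg, sum_fibVec_not_isNegIndex hj hneg.1 hneg.2.2]
    ring
  · simp only [hneg, iff_false, not_not]
    rw [fibVec_of_not_isNegIndex hj0 hneg, sum_fibVec_isNegIndex hn hj hj0 hneg]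
    ring

theorem vecMul_fibVec_coloringMatrix (hn : 3 ≤ n) :
    (fun i : Fin n => fibVec n i) ᵥ* coloringMatrix (IsNegIndex n) ℚ n = fun _ => 1 := by
  funext j
  rw [vecMul_coloringMatrix_apply]
  exact fibVec_add_sum_of_not_iff hn j.isLt

theorem sum_fibVec (hn : 3 ≤ n) : ∑ i ∈ range n, fibVec n i = 2 + fib (n - 1) := by
  obtain ⟨m, rfl⟩ : ∃ m, n = m + 1 := ⟨n - 1, by omega⟩
  have hlast : ¬IsNegIndex (m + 1) m := by unfold IsNegIndex; omega
  rw [sum_range_succ, ← sum_filter_add_sum_filter_not _ (IsNegIndex (m + 1)),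
    sum_fibVec_isNegIndex hn (by omega) (by omega) hlast,
    sum_fibVec_not_isNegIndex (by omega) (by omega) (by omega),
    fibVec_of_not_isNegIndex (by omega) hlast, add_tsub_cancel_right]
  ring

end Fibonacci

/-- For every n ≥ 3 there exists an invertible upper triangular (0,1)-matrix A
with S(A⁻¹) = 2 + F_{n-1}. -/
theorem stmt_3 (n : ℕ) (hn : 3 ≤ n) :
    ∃ A : Matrix (Fin n) (Fin n) ℚ,
      (∀ i j : Fin n, (j : ℕ) < (i : ℕ) → A i j = 0) ∧
      (∀ i : Fin n, A i i = 1) ∧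
      (∀ i j : Fin n, A i j = 0 ∨ A i j = 1) ∧
      ∑ i : Fin n, ∑ j : Fin n, A⁻¹ i j = 2 + (Nat.fib (n - 1) : ℚ) := by
  refine ⟨coloringMatrix (IsNegIndex n) ℚ n, fun _ _ h => coloringMatrix_apply_of_lt h,
    coloringMatrix_apply_self, coloringMatrix_apply_eq_zero_or_eq_one, ?_⟩
  have hdet : IsUnit (coloringMatrix (IsNegIndex n) ℚ n).det := by
    rw [det_coloringMatrix]; exact isUnit_one
  rw [sum_inv_apply_eq_sum_of_vecMul_eq_one hdet (vecMul_fibVec_coloringMatrix hn),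
    Fin.sum_univ_eq_sum_range (fibVec n), sum_fibVec hn]
end

section
/- For every n ≥ 3, there exists an n×n invertible upper triangular (0,1)-matrix A such that the sum of the entries of A⁻¹ equals 2 − F_{n-1}. -/
/-!
The matrix is built so that, for `0 < i < n - 4`, rows `i` and `i + 2` agree beyond column
`i + 2`, while row `i` has a one in column `i + 1` and a zero in column `i + 2`. Hence the
solution `x` of `A x = 1` satisfies `x i = x (i + 2) - x (i + 1)`, which makes
`x i = (-1) ^ i * F (n - 1 - i)` in the middle range, with `x (n - 2) = x (n - 1) = 1` from the last
two rows (those of the identity), and `x 0 = x 1 = -F (n - 2)` since row `0` is row `1` with its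
diagonal one moved to column `0`. The entries of `A⁻¹` add up to `∑ x i`, and the alternating
middle part telescopes to `-F (n - 3)`.
-/

open Finset Matrix

theorem Matrix.sum_sum_inv_eq_sum_of_mulVec_eq_one {ι R : Type*} [Fintype ι] [DecidableEq ι]
    [CommRing R] {A : Matrix ι ι R} (hA : IsUnit A.det) {x : ι → R} (hx : A *ᵥ x = 1) :
    ∑ i, ∑ j, A⁻¹ i j = ∑ i, x i := by
  have hx' : x = A⁻¹ *ᵥ 1 := by
    rw [← hx, mulVec_mulVec, nonsing_inv_mul A hA, one_mulVec]
  simp [hx', mulVec, dotProduct]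

/-- Columns of the ones in row `i`: besides the diagonal, row `i < n - 2` has ones in the later
columns of the other parity, where row `0` counts as odd and the last two columns count as even. -/
def rowSupport (n i : ℕ) : Finset ℕ :=
  (range n).filter fun j => j = i ∨ (i < j ∧ i + 2 < n ∧
    ((i = 0 ∨ i % 2 = 1) ∧ (j % 2 = 0 ∨ n ≤ j + 2) ∨
      (i ≠ 0 ∧ i % 2 = 0) ∧ j % 2 = 1 ∧ j + 2 < n))

def fibSolution (n j : ℕ) : ℚ :=
  if j = 0 then -(Nat.fib (n - 2) : ℚ)
  else if n ≤ j + 2 then 1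
  else (-1) ^ j * Nat.fib (n - 1 - j)

lemma rowSupport_subset_range (n i : ℕ) : rowSupport n i ⊆ range n := filter_subset _ _

section
variable {n i : ℕ}

lemma notMem_rowSupport_of_lt {j : ℕ} (h : j < i) : j ∉ rowSupport n i := by
  simp only [rowSupport, mem_filter]
  omega

lemma rowSupport_of_le (hi : i < n) (h : n ≤ i + 2) : rowSupport n i = {i} := by
  ext j
  simp [rowSupport]
  omega

lemma rowSupport_zero (hn : 4 ≤ n) : rowSupport n 0 = insert 0 ((rowSupport n 1).erase 1) := by
  ext j
  simp [rowSupport]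
  omega

lemma rowSupport_eq_insert_insert_erase (hi : 1 ≤ i) (h : i + 5 ≤ n) :
    rowSupport n i = insert i (insert (i + 1) ((rowSupport n (i + 2)).erase (i + 2))) := by
  ext j
  simp [rowSupport]
  omega

lemma fibSolution_zero : fibSolution n 0 = -(Nat.fib (n - 2) : ℚ) := if_pos rfl

lemma fibSolution_of_le (hi : i ≠ 0) (h : n ≤ i + 2) : fibSolution n i = 1 := by
  rw [fibSolution, if_neg hi, if_pos h]

lemma fibSolution_of_lt (hi : i ≠ 0) (h : i + 2 < n) :
    fibSolution n i = (-1) ^ i * Nat.fib (n - 1 - i) := by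
  rw [fibSolution, if_neg hi, if_neg (by omega)]

lemma fibSolution_add_fibSolution_sub (hi : i ≠ 0) (h : i + 5 ≤ n) :
    fibSolution n i + fibSolution n (i + 1) - fibSolution n (i + 2) = 0 := by
  rw [fibSolution_of_lt hi (by omega), fibSolution_of_lt (by omega) (by omega),
    fibSolution_of_lt (by omega) (by omega), show n - 1 - i = n - 1 - (i + 2) + 2 by omega,
    show n - 1 - (i + 1) = n - 1 - (i + 2) + 1 by omega, Nat.fib_add_two]
  push_cast
  ring

lemma sum_fibSolution_rowSupport_of_add_three (hi : i ≠ 0) :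
    ∑ j ∈ rowSupport (i + 3) i, fibSolution (i + 3) j = 1 := by
  have hx : fibSolution (i + 3) i = (-1) ^ i := by
    rw [fibSolution_of_lt hi (by omega), show i + 3 - 1 - i = 2 by omega]
    simp
  rcases Nat.mod_two_eq_zero_or_one i with hpar | hpar
  · rw [show rowSupport (i + 3) i = {i} by ext j; simp [rowSupport]; omega]
    simp [hx, (Nat.even_iff.mpr hpar).neg_one_pow]
  · rw [show rowSupport (i + 3) i = {i, i + 1, i + 2} by ext j; simp [rowSupport]; omega]
    simp [hx, (Nat.odd_iff.mpr hpar).neg_one_pow, fibSolution_of_le]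

lemma sum_fibSolution_rowSupport_of_add_four (hi : i ≠ 0) :
    ∑ j ∈ rowSupport (i + 4) i, fibSolution (i + 4) j = 1 := by
  have hx : fibSolution (i + 4) i = 2 * (-1) ^ i := by
    rw [fibSolution_of_lt hi (by omega), show i + 4 - 1 - i = 3 by omega,
      show Nat.fib 3 = 2 from rfl]
    push_cast
    ring
  have hx1 : fibSolution (i + 4) (i + 1) = -(-1) ^ i := by
    rw [fibSolution_of_lt (by omega) (by omega), show i + 4 - 1 - (i + 1) = 2 by omega]
    simp [pow_succ]
  rcases Nat.mod_two_eq_zero_or_one i with hpar | hpar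
  · rw [show rowSupport (i + 4) i = {i, i + 1} by ext j; simp [rowSupport]; omega]
    simp [hx, hx1, (Nat.even_iff.mpr hpar).neg_one_pow]
    norm_num
  · rw [show rowSupport (i + 4) i = {i, i + 1, i + 2, i + 3} by ext j; simp [rowSupport]; omega]
    simp [hx, hx1, (Nat.odd_iff.mpr hpar).neg_one_pow, fibSolution_of_le]
    norm_num

theorem sum_range_fibSolution (hn : 3 ≤ n) :
    ∑ j ∈ range n, fibSolution n j = 2 - Nat.fib (n - 1) := by
  obtain ⟨k, rfl⟩ : ∃ k, n = k + 3 := ⟨n - 3, by omega⟩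
  set b : ℕ → ℚ := fun i => (-1) ^ (i + 1) * Nat.fib (k - i)
  have htelescope : ∀ i ∈ range k, fibSolution (k + 3) (i + 1) = b i - b (i + 1) := by
    intro i hi
    rw [mem_range] at hi
    rw [fibSolution_of_lt (by omega) (by omega),
      show k + 3 - 1 - (i + 1) = k - (i + 1) + 2 by omega]
    simp only [b, show k - i = k - (i + 1) + 1 by omega, Nat.fib_add_two]
    push_cast
    ring
  rw [sum_range_succ, sum_range_succ, sum_range_succ', sum_congr rfl htelescope, sum_range_sub',
    fibSolution_zero, fibSolution_of_le (by omega) le_rfl, fibSolution_of_le (by omega) (by omega)]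
  simp [b, Nat.fib_add_two]
  ring

end

theorem sum_fibSolution_rowSupport (n i : ℕ) (hn : 3 ≤ n) (hi : i < n) :
    ∑ j ∈ rowSupport n i, fibSolution n j = 1 := by
  by_cases hlast : n ≤ i + 2
  · rw [rowSupport_of_le hi hlast, sum_singleton, fibSolution_of_le (by omega) hlast]
  rcases Nat.eq_zero_or_pos i with rfl | hi0
  · by_cases hn3 : n = 3
    · subst hn3
      rw [show rowSupport 3 0 = {0, 1, 2} by decide]
      simp [fibSolution]
    rw [rowSupport_zero (by omega), sum_insert (by simp [rowSupport]),
      sum_erase_eq_sub (by simp [rowSupport]; omega), sum_fibSolution_rowSupport n 1 hn (by omega),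
      fibSolution_zero, fibSolution_of_lt one_ne_zero (by omega),
      show n - 1 - 1 = n - 2 by omega]
    ring
  by_cases hgen : i + 5 ≤ n
  · rw [rowSupport_eq_insert_insert_erase hi0 hgen,
      sum_insert (by simp [notMem_rowSupport_of_lt]),
      sum_insert (by simp [notMem_rowSupport_of_lt]),
      sum_erase_eq_sub (by simp [rowSupport]; omega),
      sum_fibSolution_rowSupport n (i + 2) hn (by omega)]
    linear_combination fibSolution_add_fibSolution_sub hi0.ne' hgen
  obtain rfl | rfl : n = i + 3 ∨ n = i + 4 := by omega
  exacts [sum_fibSolution_rowSupport_of_add_three hi0.ne',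
    sum_fibSolution_rowSupport_of_add_four hi0.ne']
termination_by n - i

def fibMatrix (n : ℕ) : Matrix (Fin n) (Fin n) ℚ :=
  of fun i j => if (j : ℕ) ∈ rowSupport n i then 1 else 0

lemma fibMatrix_isUpperTriangular (n : ℕ) : (fibMatrix n).IsUpperTriangular :=
  fun _ _ h => if_neg (notMem_rowSupport_of_lt h)

lemma fibMatrix_apply_self {n : ℕ} (i : Fin n) : fibMatrix n i i = 1 :=
  if_pos (by simp [rowSupport])

lemma det_fibMatrix (n : ℕ) : (fibMatrix n).det = 1 := by
  rw [det_of_isUpperTriangular (fibMatrix_isUpperTriangular n)]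
  exact prod_eq_one fun i _ => fibMatrix_apply_self i

lemma fibMatrix_mulVec_fibSolution {n : ℕ} (hn : 3 ≤ n) :
    fibMatrix n *ᵥ (fun j => fibSolution n j) = 1 := by
  funext i
  simp only [mulVec, dotProduct, fibMatrix, of_apply, ite_mul, one_mul, zero_mul, Pi.one_apply]
  rw [Fin.sum_univ_eq_sum_range (fun j => if j ∈ rowSupport n i then fibSolution n j else 0),
    sum_ite_mem, inter_eq_right.mpr (rowSupport_subset_range n i)]
  exact sum_fibSolution_rowSupport n i hn i.2

/-- For every n ≥ 3 there exists an invertible upper triangular (0,1)-matrix A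
with S(A⁻¹) = 2 − F_{n-1}. -/
theorem stmt_4 (n : ℕ) (hn : 3 ≤ n) :
    ∃ A : Matrix (Fin n) (Fin n) ℚ,
      (∀ i j : Fin n, (j : ℕ) < (i : ℕ) → A i j = 0) ∧
      (∀ i : Fin n, A i i = 1) ∧
      (∀ i j : Fin n, A i j = 0 ∨ A i j = 1) ∧
      ∑ i : Fin n, ∑ j : Fin n, A⁻¹ i j = 2 - (Nat.fib (n - 1) : ℚ) := by
  refine ⟨fibMatrix n, fun i j => fibMatrix_isUpperTriangular n (i := i) (j := j),
    fibMatrix_apply_self, fun _ _ => (ite_eq_or_eq _ _ _).symm, ?_⟩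
  have hdet : IsUnit (fibMatrix n).det := by rw [det_fibMatrix]; exact isUnit_one
  rw [sum_sum_inv_eq_sum_of_mulVec_eq_one hdet (fibMatrix_mulVec_fibSolution hn),
    Fin.sum_univ_eq_sum_range (fibSolution n), sum_range_fibSolution hn]
end

section
/- For every n ≥ 3 and every integer S with 2 − F_{n-1} ≤ S ≤ 2 + F_{n-1}, there exists an n×n invertible upper triangular (0,1)-matrix A such that the sum of the entries of A⁻¹ equals S. -/
/-!
If a unitriangular matrix `A` satisfies `uᵀ A = 𝟙ᵀ`, then `𝟙ᵀ A⁻¹ = uᵀ`, so the entries of `A⁻¹`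
sum to `∑ uⱼ`. Column `j` of a unitriangular (0,1)-matrix is the diagonal one plus ones on a set
`Tⱼ ⊆ [0, j)`, so such an `A` exists as soon as every `1 - uⱼ` is a sum of a subset of the earlier
terms (an *admissible* sequence).

Admissible sequences with large totals come from a Fibonacci-type recursion: if the subset sums
of an admissible `u` fill `[N, P]` and `∑ u = N + P`, appending `1 - N` or `1 - P` keeps this
invariant with the interval `[N, P + 1 - N]` or `[N + 1 - P, P]`. Alternating the two moves from
`1, 1` makes the interval `[1 - F_{k+1}, F_{k+2} + 1]` or `[1 - F_{k+2}, F_{k+1} + 1]`, and a last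
term `S - (N + P)` gives total `S` for any `S ∈ [N + 1, P + 1]`.
-/

open Finset Matrix

def subsetSums (c : ℕ → ℤ) (m : ℕ) : Set ℤ :=
  {x | ∃ T ⊆ range m, ∑ i ∈ T, c i = x}

def Admissible (c : ℕ → ℤ) (m : ℕ) : Prop :=
  ∀ j < m, 1 - c j ∈ subsetSums c j

structure FillsIcc (c : ℕ → ℤ) (m : ℕ) (N P : ℤ) : Prop where
  admissible : Admissible c m
  sum_eq : ∑ i ∈ range m, c i = N + P
  Icc_subset : Set.Icc N P ⊆ subsetSums c m

section SubsetSums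

variable {c : ℕ → ℤ} {m : ℕ}

lemma subsetSums_mono {m' : ℕ} (h : m ≤ m') : subsetSums c m ⊆ subsetSums c m' := by
  rintro x ⟨T, hT, rfl⟩
  exact ⟨T, hT.trans (range_subset_range.mpr h), rfl⟩

lemma add_mem_subsetSums_succ {x : ℤ} (hx : x ∈ subsetSums c m) :
    x + c m ∈ subsetSums c (m + 1) := by
  obtain ⟨T, hT, rfl⟩ := hx
  have hm : m ∉ T := fun h => (mem_range.mp (hT h)).false
  refine ⟨insert m T, ?_, by rw [sum_insert hm, add_comm]⟩
  rw [range_add_one]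
  exact insert_subset_insert m hT

lemma subsetSums_update_of_le {k : ℕ} (a : ℤ) (h : m ≤ k) :
    subsetSums (Function.update c k a) m = subsetSums c m := by
  ext x
  refine exists_congr fun T => and_congr_right fun hT => ?_
  rw [sum_congr rfl fun i hi => Function.update_of_ne (by grind) a c]

lemma Icc_subset_subsetSums_succ {N P : ℤ} (h : Set.Icc N P ⊆ subsetSums c m)
    (h₁ : N + c m ≤ P + 1) (h₂ : N ≤ P + c m + 1) :
    Set.Icc (min N (N + c m)) (max P (P + c m)) ⊆ subsetSums c (m + 1) := by
  rintro x ⟨hxN, hxP⟩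
  by_cases hx : x ∈ Set.Icc N P
  · exact subsetSums_mono m.le_succ (h hx)
  · have hx' : x - c m ∈ Set.Icc N P := by grind
    simpa using add_mem_subsetSums_succ (h hx')

end SubsetSums

lemma Admissible.update {c : ℕ → ℤ} {m : ℕ} {a : ℤ} (hc : Admissible c m)
    (ha : 1 - a ∈ subsetSums c m) : Admissible (Function.update c m a) (m + 1) := by
  intro j hj
  rw [subsetSums_update_of_le a (by omega)]
  rcases Nat.lt_succ_iff_lt_or_eq.mp hj with hj | rfl
  · simpa [Function.update_of_ne hj.ne] using hc j hj
  · simpa using ha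

namespace FillsIcc

variable {c : ℕ → ℤ} {m : ℕ} {N P : ℤ}

lemma zero (c : ℕ → ℤ) : FillsIcc c 0 0 0 where
  admissible _ h := absurd h (Nat.not_lt_zero _)
  sum_eq := by simp
  Icc_subset x hx := ⟨∅, empty_subset _, by simp_all⟩

lemma snoc (hF : FillsIcc c m N P) (hN : N ≤ 0) (hP : 0 ≤ P) {a : ℤ}
    (ha : 1 - a ∈ Set.Icc N P) :
    FillsIcc (Function.update c m a) (m + 1) (min N (N + a)) (max P (P + a)) where
  admissible := hF.admissible.update (hF.Icc_subset ha)
  sum_eq := by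
    rw [sum_range_succ, sum_congr rfl fun i hi => Function.update_of_ne (by grind) a c,
      hF.sum_eq, Function.update_self]
    grind
  Icc_subset := by
    have hIcc : Set.Icc N P ⊆ subsetSums (Function.update c m a) m := by
      rw [subsetSums_update_of_le a le_rfl]
      exact hF.Icc_subset
    simpa using Icc_subset_subsetSums_succ hIcc
      (by rw [Function.update_self]; linarith [ha.1])
      (by rw [Function.update_self]; linarith [ha.2])

lemma exists_admissible_sum_eq (hF : FillsIcc c m N P) (hN : N ≤ 0) (hP : 0 ≤ P) {S : ℤ}
    (hS : S ∈ Set.Icc (N + 1) (P + 1)) :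
    ∃ u, Admissible u (m + 1) ∧ ∑ i ∈ range (m + 1), u i = S := by
  have hF' := hF.snoc hN hP (a := S - (N + P)) (by grind)
  exact ⟨_, hF'.admissible, by rw [hF'.sum_eq]; grind⟩

end FillsIcc

lemma exists_fillsIcc_fib (k : ℕ) :
    (∃ c, FillsIcc c (k + 2) (1 - Nat.fib (k + 1)) (Nat.fib (k + 2) + 1)) ∧
      ∃ c, FillsIcc c (k + 2) (1 - Nat.fib (k + 2)) (Nat.fib (k + 1) + 1) := by
  induction k with
  | zero =>
    have h := ((FillsIcc.zero 0).snoc le_rfl le_rfl (a := 1) (by simp)).snoc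
      (by simp) (by simp) (a := 1) (by simp)
    norm_num at h
    exact ⟨⟨_, h⟩, ⟨_, h⟩⟩
  | succ k ih =>
    obtain ⟨⟨cPos, hPos⟩, ⟨cNeg, hNeg⟩⟩ := ih
    have hfib : (Nat.fib (k + 3) : ℤ) = Nat.fib (k + 1) + Nat.fib (k + 2) := by
      exact_mod_cast Nat.fib_add_two
    have hpos : (0 : ℤ) < Nat.fib (k + 1) := by exact_mod_cast Nat.fib_pos.mpr k.succ_pos
    have hle : (Nat.fib (k + 1) : ℤ) ≤ Nat.fib (k + 2) := by exact_mod_cast Nat.fib_le_fib_succ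
    constructor
    · have h := hNeg.snoc (by grind) (by grind) (a := Nat.fib (k + 2)) (by grind)
      exact ⟨_, by convert h using 2 <;> grind⟩
    · have h := hPos.snoc (by grind) (by grind) (a := -Nat.fib (k + 2)) (by grind)
      exact ⟨_, by convert h using 2 <;> grind⟩

lemma exists_admissible_sum_eq_of_fib (k : ℕ) {S : ℤ} (h₁ : 2 - (Nat.fib (k + 2) : ℤ) ≤ S)
    (h₂ : S ≤ 2 + (Nat.fib (k + 2) : ℤ)) :
    ∃ u, Admissible u (k + 3) ∧ ∑ i ∈ range (k + 3), u i = S := by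
  obtain ⟨⟨cPos, hPos⟩, ⟨cNeg, hNeg⟩⟩ := exists_fillsIcc_fib k
  have hpos : (0 : ℤ) < Nat.fib (k + 1) := by exact_mod_cast Nat.fib_pos.mpr k.succ_pos
  have hle : (Nat.fib (k + 1) : ℤ) ≤ Nat.fib (k + 2) := by exact_mod_cast Nat.fib_le_fib_succ
  rcases le_or_gt 2 S with hS | hS
  · exact hPos.exists_admissible_sum_eq (by grind) (by grind) (by grind)
  · exact hNeg.exists_admissible_sum_eq (by grind) (by grind) (by grind)

lemma sum_inv_eq_sum_of_vecMul_eq_one {ι K : Type*} [Fintype ι] [DecidableEq ι] [Field K]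
    {A : Matrix ι ι K} (hA : IsUnit A.det) {v : ι → K} (hv : v ᵥ* A = 1) :
    ∑ i, ∑ j, A⁻¹ i j = ∑ j, v j := by
  have hv' : 1 ᵥ* A⁻¹ = v := by rw [← hv, vecMul_vecMul, mul_nonsing_inv A hA, vecMul_one]
  rw [← hv']
  simp only [vecMul, dotProduct, Pi.one_apply, one_mul]
  exact sum_comm

lemma exists_unitriangular_of_admissible {n : ℕ} {u : ℕ → ℤ} (hu : Admissible u n) :
    ∃ A : Matrix (Fin n) (Fin n) ℚ,
      (∀ i j : Fin n, (j : ℕ) < (i : ℕ) → A i j = 0) ∧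
      (∀ i : Fin n, A i i = 1) ∧
      (∀ i j : Fin n, A i j = 0 ∨ A i j = 1) ∧
      ∑ i : Fin n, ∑ j : Fin n, A⁻¹ i j = ∑ j ∈ range n, (u j : ℚ) := by
  choose T hT hTsum using fun j : Fin n => hu j j.isLt
  set A : Matrix (Fin n) (Fin n) ℚ :=
    of fun i j => if (i : ℕ) ∈ insert (j : ℕ) (T j) then 1 else 0
  have hlow : ∀ i j : Fin n, (j : ℕ) < (i : ℕ) → A i j = 0 := by
    intro i j hij
    have : (i : ℕ) ∉ insert (j : ℕ) (T j) := by grind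
    simp only [A, of_apply, if_neg this]
  have hdiag : ∀ i : Fin n, A i i = 1 := by simp [A]
  have hdet : IsUnit A.det := by
    rw [det_of_isUpperTriangular hlow, prod_eq_one fun i _ => hdiag i]
    exact isUnit_one
  have hcol : (fun i : Fin n => (u i : ℚ)) ᵥ* A = 1 := by
    funext j
    have hsub : insert (j : ℕ) (T j) ⊆ range n := by grind [insert_subset_iff]
    have hj : (j : ℕ) ∉ T j := fun h => (mem_range.mp (hT j h)).false
    calc ((fun i : Fin n => (u i : ℚ)) ᵥ* A) j
        = ∑ i ∈ range n, if i ∈ insert (j : ℕ) (T j) then (u i : ℚ) else 0 := by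
          rw [← Fin.sum_univ_eq_sum_range
            (fun i => if i ∈ insert (j : ℕ) (T j) then (u i : ℚ) else 0)]
          simp [vecMul, dotProduct, A]
      _ = ∑ i ∈ insert (j : ℕ) (T j), (u i : ℚ) := by rw [sum_ite_mem, inter_eq_right.mpr hsub]
      _ = 1 := by
          rw [sum_insert hj]
          exact_mod_cast (by rw [hTsum j]; ring : u j + ∑ i ∈ T j, u i = 1)
  refine ⟨A, hlow, hdiag, fun i j => by simp only [A, of_apply]; split_ifs <;> simp, ?_⟩
  rw [sum_inv_eq_sum_of_vecMul_eq_one hdet hcol, Fin.sum_univ_eq_sum_range (fun i => (u i : ℚ))]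

/-- For n ≥ 3 and any integer S with 2 − F_{n-1} ≤ S ≤ 2 + F_{n-1}, there is an
invertible upper triangular (0,1)-matrix A with S(A⁻¹) = S. -/
theorem stmt_5 (n : ℕ) (hn : 3 ≤ n) (S : ℤ)
    (h1 : 2 - (Nat.fib (n - 1) : ℤ) ≤ S) (h2 : S ≤ 2 + (Nat.fib (n - 1) : ℤ)) :
    ∃ A : Matrix (Fin n) (Fin n) ℚ,
      (∀ i j : Fin n, (j : ℕ) < (i : ℕ) → A i j = 0) ∧
      (∀ i : Fin n, A i i = 1) ∧
      (∀ i j : Fin n, A i j = 0 ∨ A i j = 1) ∧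
      ∑ i : Fin n, ∑ j : Fin n, A⁻¹ i j = (S : ℚ) := by
  obtain ⟨k, rfl⟩ : ∃ k, n = k + 3 := ⟨n - 3, by omega⟩
  obtain ⟨u, hu, hsum⟩ := exists_admissible_sum_eq_of_fib k h1 h2
  obtain ⟨A, hlow, hdiag, h01, hA⟩ := exists_unitriangular_of_admissible hu
  exact ⟨A, hlow, hdiag, h01, by rw [hA]; exact_mod_cast hsum⟩
end

section
/- A number S is equal to the sum of the entries of the inverse of some invertible upper triangular (0,1)-matrix (of some size n ≥ 1) if and only if S is an integer. -/
/-!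
A unitriangular matrix has determinant `1`, so its inverse is its adjugate, whose entries are
integers when those of the matrix are; hence the entries of the inverse sum to an integer.
Conversely, let `N = r cᵀ` where `r` and `c` are the indicators of `[0, k)` and `[k, 2k)`. Then
`1 + N` is a unitriangular 0/1 matrix and `N² = (c ⬝ r) N = 0`, so `(1 + N)⁻¹ = 1 - N`, whose
entries sum to `n - k²`. For `2k ≤ n` this takes every integer value.
-/

open Matrix Finset

namespace Matrix

variable {n : Type*} [Fintype n]

theorem sum_sum_vecMulVec_apply {R : Type*} [CommSemiring R] (r c : n → R) :
    ∑ i, ∑ j, vecMulVec r c i j = (∑ i, r i) * ∑ j, c j := by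
  simp only [vecMulVec_apply, Finset.sum_mul_sum]

variable [DecidableEq n]

theorem adjugate_apply_mem {R : Type*} [CommRing R] (S : Subring R) {A : Matrix n n R}
    (hA : ∀ i j, A i j ∈ S) (i j : n) : A.adjugate i j ∈ S := by
  let A' : Matrix n n S := of fun i j => ⟨A i j, hA i j⟩
  have hA' : A = S.subtype.mapMatrix A' := rfl
  rw [hA', ← RingHom.map_adjugate]
  exact (A'.adjugate i j).2

theorem inv_apply_mem {K : Type*} [Field K] (S : Subring K) {A : Matrix n n K}
    (hA : ∀ i j, A i j ∈ S) (hdet : A.det⁻¹ ∈ S) (i j : n) : A⁻¹ i j ∈ S := by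
  rw [inv_def, Ring.inverse_eq_inv', smul_apply, smul_eq_mul]
  exact S.mul_mem hdet (adjugate_apply_mem S hA i j)

theorem inv_one_add_of_mul_self_eq_zero {R : Type*} [CommRing R] {N : Matrix n n R}
    (hN : N * N = 0) : (1 + N)⁻¹ = 1 - N :=
  inv_eq_right_inv (by rw [add_mul, one_mul, mul_sub, mul_one, hN]; abel)

theorem sum_sum_one_apply {R : Type*} [AddCommMonoidWithOne R] :
    ∑ i : n, ∑ j : n, (1 : Matrix n n R) i j = Fintype.card n := by
  simp [one_apply]

end Matrix

section Construction

variable {n : ℕ}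

def icoIndicator (n a b : ℕ) : Fin n → ℚ := fun i => if a ≤ (i : ℕ) ∧ (i : ℕ) < b then 1 else 0

theorem icoIndicator_eq_zero_or_eq_one (a b : ℕ) (i : Fin n) :
    icoIndicator n a b i = 0 ∨ icoIndicator n a b i = 1 := by
  unfold icoIndicator; split_ifs <;> simp

theorem sum_icoIndicator {a b : ℕ} (h : b ≤ n) : ∑ i, icoIndicator n a b i = (b - a : ℕ) := by
  unfold icoIndicator
  rw [Fin.sum_univ_eq_sum_range (fun i => if a ≤ i ∧ i < b then (1 : ℚ) else 0), sum_boole]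
  have : (range n).filter (fun i => a ≤ i ∧ i < b) = Ico a b := by
    ext i; simp only [mem_filter, mem_range, mem_Ico]; omega
  rw [this, Nat.card_Ico]

theorem icoIndicator_mul_icoIndicator_of_le {a b c d : ℕ} {i j : Fin n} (hbc : b ≤ c)
    (hji : j ≤ i) :
    icoIndicator n a b i * icoIndicator n c d j = 0 := by
  unfold icoIndicator
  split_ifs <;> first | omega | simp

def pairingMatrix (n k : ℕ) : Matrix (Fin n) (Fin n) ℚ :=
  1 + vecMulVec (icoIndicator n 0 k) (icoIndicator n k (2 * k))

theorem pairingMatrix_apply_of_lt (k : ℕ) {i j : Fin n} (h : (j : ℕ) < i) :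
    pairingMatrix n k i j = 0 := by
  rw [pairingMatrix, Matrix.add_apply, one_apply_ne (by omega), vecMulVec_apply,
    icoIndicator_mul_icoIndicator_of_le le_rfl h.le, add_zero]

theorem pairingMatrix_apply_self (k : ℕ) (i : Fin n) : pairingMatrix n k i i = 1 := by
  rw [pairingMatrix, Matrix.add_apply, one_apply_eq, vecMulVec_apply,
    icoIndicator_mul_icoIndicator_of_le le_rfl le_rfl, add_zero]

theorem pairingMatrix_apply_eq_zero_or_eq_one (k : ℕ) (i j : Fin n) :
    pairingMatrix n k i j = 0 ∨ pairingMatrix n k i j = 1 := by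
  obtain rfl | hij := eq_or_ne i j
  · exact Or.inr (pairingMatrix_apply_self k i)
  rw [pairingMatrix, Matrix.add_apply, one_apply_ne hij, vecMulVec_apply, zero_add]
  rcases icoIndicator_eq_zero_or_eq_one 0 k i with h | h <;>
    simp [h, icoIndicator_eq_zero_or_eq_one]

theorem sum_sum_pairingMatrix_inv_apply {k : ℕ} (h : 2 * k ≤ n) :
    ∑ i, ∑ j, (pairingMatrix n k)⁻¹ i j = n - k ^ 2 := by
  have hdot : icoIndicator n k (2 * k) ⬝ᵥ icoIndicator n 0 k = 0 :=
    sum_eq_zero fun i _ => by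
      rw [mul_comm]; exact icoIndicator_mul_icoIndicator_of_le le_rfl le_rfl
  have hsq : vecMulVec (icoIndicator n 0 k) (icoIndicator n k (2 * k)) *
      vecMulVec (icoIndicator n 0 k) (icoIndicator n k (2 * k)) = 0 := by
    rw [vecMulVec_mul_vecMulVec, hdot, zero_smul]; ext; simp [vecMulVec_apply]
  simp only [pairingMatrix, inv_one_add_of_mul_self_eq_zero hsq, Matrix.sub_apply,
    sum_sub_distrib, sum_sum_one_apply, sum_sum_vecMulVec_apply,
    sum_icoIndicator (by omega : k ≤ n), sum_icoIndicator h, Fintype.card_fin]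
  push_cast [show 2 * k - k = k by omega, Nat.sub_zero]
  ring

end Construction

theorem exists_two_mul_le_sub_sq_eq (z : ℤ) :
    ∃ k n : ℕ, 1 ≤ k ∧ 2 * k ≤ n ∧ (n : ℤ) - k ^ 2 = z := by
  set k := z.natAbs + 2
  have hk : 2 * (k : ℤ) ≤ z + k ^ 2 := by
    simp only [k]; push_cast; nlinarith [abs_nonneg z, neg_abs_le z]
  obtain ⟨n, hn⟩ := Int.eq_ofNat_of_zero_le ((by positivity : 0 ≤ 2 * (k : ℤ)).trans hk)
  exact ⟨k, n, by omega, by zify; linarith, by linarith⟩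

/-- A number S is a sum of entries of the inverse of some invertible upper
triangular (0,1)-matrix (of some size n ≥ 1) iff S is an integer. -/
theorem stmt_6 (S : ℚ) :
    (∃ n : ℕ, 1 ≤ n ∧ ∃ A : Matrix (Fin n) (Fin n) ℚ,
      (∀ i j : Fin n, (j : ℕ) < (i : ℕ) → A i j = 0) ∧
      (∀ i : Fin n, A i i = 1) ∧
      (∀ i j : Fin n, A i j = 0 ∨ A i j = 1) ∧
      ∑ i : Fin n, ∑ j : Fin n, A⁻¹ i j = S) ↔ ∃ z : ℤ, S = (z : ℚ) := by
  constructor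
  · rintro ⟨n, -, A, hupper, hdiag, h01, rfl⟩
    have hdet : A.det = 1 := by simp [det_of_isUpperTriangular hupper, hdiag]
    have hint : ∀ i j, A i j ∈ (Int.castRingHom ℚ).range := fun i j => by
      rcases h01 i j with h | h <;> rw [h]
      exacts [zero_mem _, one_mem _]
    obtain ⟨z, hz⟩ := Subring.sum_mem _ fun i _ => Subring.sum_mem _ fun j _ =>
      inv_apply_mem _ hint (by simp [hdet]) i j
    exact ⟨z, hz.symm⟩
  · rintro ⟨z, rfl⟩
    obtain ⟨k, n, hk, hkn, hz⟩ := exists_two_mul_le_sub_sq_eq z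
    refine ⟨n, by omega, pairingMatrix n k, fun i j => pairingMatrix_apply_of_lt k,
      pairingMatrix_apply_self k, pairingMatrix_apply_eq_zero_or_eq_one k, ?_⟩
    rw [sum_sum_pairingMatrix_inv_apply hkn, ← hz]
    push_cast
    ring
end

section
/- For every n ≥ 4 and every n×n matrix A that is upper triangular with unit diagonal and with entries in {0,1}, the n-th entry of the row vector eᵀA⁻¹ has absolute value at most F_{n-1}, where e is the all-ones vector. -/
/-!
The row vector `y = eᵀA⁻¹` solves `y A = eᵀ`; as `A` is unitriangular this reads
`y_j = 1 - ∑_{k<j} A_kj y_k`, so `y_j` lies between `1 - P_j` and `1 + N_j`, where `P_j` and `N_j`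
are the sums of the positive and negative parts of `y_0, …, y_{j-1}`. Induction on `j ≥ 1` gives
`P_j ≤ F_j + 1`, `N_j ≤ F_j - 1` and `P_j + N_j ≤ F_{j+1}`: the new entry adds at most
`1 + N_j ≤ F_j` to `P`, or at most `P_j - 1 ≤ F_j` to `N`. Hence `|y_j| ≤ F_j`.
-/

open Finset Matrix

section FibonacciBound

variable {R : Type*} [CommRing R] [LinearOrder R] [IsStrictOrderedRing R]

theorem mul_le_posPart_of_mem_Icc {a : R} (x : R) (ha : a ∈ Set.Icc 0 1) : x * a ≤ x⁺ := by
  have := posPart_sub_negPart x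
  nlinarith [ha.1, ha.2, posPart_nonneg x, negPart_nonneg x]

theorem neg_negPart_le_mul_of_mem_Icc {a : R} (x : R) (ha : a ∈ Set.Icc 0 1) :
    -x⁻ ≤ x * a := by
  have := posPart_sub_negPart x
  nlinarith [ha.1, ha.2, posPart_nonneg x, negPart_nonneg x]

variable {x : ℕ → R} {c : ℕ → ℕ → R} {n : ℕ}

theorem bounds_of_recurrence (hc : ∀ k j, c k j ∈ Set.Icc 0 1)
    (hx : ∀ j < n, x j = 1 - ∑ k ∈ range j, x k * c k j) {j : ℕ} (hj : j < n) :
    1 - ∑ k ∈ range j, (x k)⁺ ≤ x j ∧ x j ≤ 1 + ∑ k ∈ range j, (x k)⁻ := by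
  have hle : ∑ k ∈ range j, x k * c k j ≤ ∑ k ∈ range j, (x k)⁺ :=
    sum_le_sum fun k _ => mul_le_posPart_of_mem_Icc _ (hc k j)
  have hge : -∑ k ∈ range j, (x k)⁻ ≤ ∑ k ∈ range j, x k * c k j := by
    rw [← sum_neg_distrib]
    exact sum_le_sum fun k _ => neg_negPart_le_mul_of_mem_Icc _ (hc k j)
  rw [hx j hj]
  constructor <;> linarith

theorem partial_sums_le_fib (hc : ∀ k j, c k j ∈ Set.Icc 0 1)
    (hx : ∀ j < n, x j = 1 - ∑ k ∈ range j, x k * c k j) {m : ℕ} (hm : 1 ≤ m) (hmn : m ≤ n) :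
    ∑ k ∈ range m, (x k)⁺ ≤ Nat.fib m + 1 ∧ ∑ k ∈ range m, (x k)⁻ + 1 ≤ Nat.fib m ∧
      ∑ k ∈ range m, (x k)⁺ + ∑ k ∈ range m, (x k)⁻ ≤ Nat.fib (m + 1) := by
  induction m, hm using Nat.le_induction with
  | base =>
    have hx0 : x 0 = 1 := by simpa using hx 0 (by omega)
    simp [hx0]
  | succ m hm ih =>
    obtain ⟨hpos, hneg, hsum⟩ := ih (by omega)
    obtain ⟨hlow, hupp⟩ := bounds_of_recurrence hc hx (j := m) (by omega)
    have hfib : (Nat.fib (m + 2) : R) = Nat.fib m + Nat.fib (m + 1) := by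
      exact_mod_cast Nat.fib_add_two
    have hmono : (Nat.fib m : R) ≤ Nat.fib (m + 1) := by exact_mod_cast Nat.fib_le_fib_succ
    simp only [sum_range_succ]
    rcases le_total 0 (x m) with hxm | hxm
    · rw [posPart_eq_self.2 hxm, negPart_eq_zero.2 hxm]
      refine ⟨?_, ?_, ?_⟩ <;> linarith
    · rw [posPart_eq_zero.2 hxm, negPart_eq_neg.2 hxm]
      refine ⟨?_, ?_, ?_⟩ <;> linarith

theorem abs_le_fib_of_recurrence (hc : ∀ k j, c k j ∈ Set.Icc 0 1)
    (hx : ∀ j < n, x j = 1 - ∑ k ∈ range j, x k * c k j) {m : ℕ} (hm : 1 ≤ m) (hmn : m < n) :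
    |x m| ≤ Nat.fib m := by
  obtain ⟨hpos, hneg, -⟩ := partial_sums_le_fib hc hx hm hmn.le
  obtain ⟨hlow, hupp⟩ := bounds_of_recurrence hc hx hmn
  rw [abs_le]
  constructor <;> linarith

theorem abs_le_fib_of_fin_recurrence {y : Fin n → R} {a : Fin n → Fin n → R}
    (ha : ∀ k j, a k j ∈ Set.Icc 0 1) (hy : ∀ j, y j = 1 - ∑ k ∈ Iio j, y k * a k j)
    (j : Fin n) (hj : 1 ≤ (j : ℕ)) : |y j| ≤ Nat.fib j := by
  set x : ℕ → R := fun k => if h : k < n then y ⟨k, h⟩ else 0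
  set c : ℕ → ℕ → R := fun k i => if h : k < n ∧ i < n then a ⟨k, h.1⟩ ⟨i, h.2⟩ else 0
  have hc (k j : ℕ) : c k j ∈ Set.Icc 0 1 := by
    simp only [c]
    split_ifs
    · exact ha _ _
    · simp
  have hx : ∀ i < n, x i = 1 - ∑ k ∈ range i, x k * c k i := by
    intro i hi
    rw [← Nat.Iio_eq_range, ← Fin.map_valEmbedding_Iio (⟨i, hi⟩ : Fin n), sum_map]
    simpa [x, c, hi] using hy ⟨i, hi⟩
  simpa [x] using abs_le_fib_of_recurrence hc hx hj j.isLt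

end FibonacciBound

theorem Matrix.BlockTriangular.vecMul_apply_eq_sub {ι R : Type*} [Fintype ι] [LinearOrder ι]
    [LocallyFiniteOrderBot ι] [Ring R] {A : Matrix ι ι R} (hA : A.BlockTriangular id)
    (hdiag : ∀ i, A i i = 1) (y : ι → R) (j : ι) :
    y j = (y ᵥ* A) j - ∑ k ∈ Iio j, y k * A k j := by
  have hsupp : (y ᵥ* A) j = ∑ k ∈ Iic j, y k * A k j := by
    refine (sum_subset (subset_univ _) fun k _ hk => ?_).symm
    exact mul_eq_zero_of_right _ (hA (lt_of_not_ge (by simpa using hk)))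
  rw [hsupp, Iic_eq_cons_Iio, sum_cons, hdiag, mul_one, add_sub_cancel_right]

/-- For n ≥ 4 and A upper triangular with unit diagonal and (0,1) entries, the
n-th entry of eᵀA⁻¹ (i.e. the sum of the last column of A⁻¹) has absolute value
at most F_{n-1}. -/
theorem stmt_7 (n : ℕ) (hn : 4 ≤ n) (A : Matrix (Fin n) (Fin n) ℚ)
    (hut : ∀ i j : Fin n, (j : ℕ) < (i : ℕ) → A i j = 0)
    (hdiag : ∀ i : Fin n, A i i = 1)
    (h01 : ∀ i j : Fin n, A i j = 0 ∨ A i j = 1) :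
    |∑ i : Fin n, A⁻¹ i ⟨n - 1, by omega⟩| ≤ (Nat.fib (n - 1) : ℚ) := by
  have hA : A.BlockTriangular id := fun i j h => hut i j h
  have hunit : IsUnit A.det := by simp [det_of_isUpperTriangular hA, hdiag]
  set y : Fin n → ℚ := 1 ᵥ* A⁻¹
  have hy (j : Fin n) : y j = 1 - ∑ k ∈ Iio j, y k * A k j := by
    rw [hA.vecMul_apply_eq_sub hdiag y j, vecMul_vecMul, nonsing_inv_mul _ hunit, vecMul_one,
      Pi.one_apply]
  have hlast : y ⟨n - 1, by omega⟩ = ∑ i : Fin n, A⁻¹ i ⟨n - 1, by omega⟩ := by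
    simp [y, vecMul, dotProduct]
  rw [← hlast]
  have hA01 (k j : Fin n) : A k j ∈ Set.Icc 0 1 := by rcases h01 k j with h | h <;> simp [h]
  exact abs_le_fib_of_fin_recurrence hA01 hy _ (Nat.le_sub_one_of_lt (by omega))
end

section
/- Let G_n be the set of n×n real matrices of the form I + B where B is strictly upper triangular with entries in [0,1]. Then for n ≥ 3, the maximum of the sum of entries of A⁻¹ over A ∈ G_n is 2 + F_{n-1}, and the minimum is 2 − F_{n-1}. -/
/-!
Solve `(1 + B) x = 1`, so that `S((1 + B)⁻¹) = ∑ x`. Read `x` from the bottom row upwards as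
`y₀, y₁, …`: then `y_p = 1 - ∑_{q<p} b_q y_q` with `b_q ∈ [0,1]`, so `y_p ∈ [1 - P_p, 1 + Q_p]`,
where `P_p = posSum y p` and `Q_p = negSum y p` sum the positive and negative parts of `y₀, …, y_{p-1}`.
Induction on `m` gives `Q_m ≤ F_m - 1`, `P_m + Q_m ≤ F_{m+1}` and `P_m ≤ 1 + F_m`, and the last
term gives `∑ x = P_{n-1} - Q_{n-1} + y_{n-1} ∈ [1 - Q_{n-1}, 1 + P_{n-1}] ⊆ [2 - F_{n-1}, 2 + F_{n-1}]`.

For equality put `b_q = 1` exactly when `y_q` and `y_p` have opposite signs, so that each `y_p` is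
an endpoint of its interval. After two terms equal to `1`, alternating signs moves `(P_m, Q_m)`
between `(1 + F_m, F_{m-1} - 1)` and `(1 + F_{m-1}, F_m - 1)`; a last term of the suitable sign
reaches `2 ± F_{n-1}`.
-/

open Finset Function Nat Matrix

namespace Matrix

variable {ι R : Type*} [Fintype ι] [DecidableEq ι] [CommRing R]

theorem det_one_add_eq_one_of_forall_le [LinearOrder ι] (B : Matrix ι ι R)
    (hB : ∀ i j, j ≤ i → B i j = 0) : (1 + B).det = 1 := by
  rw [det_of_isUpperTriangular (blockTriangular_one.add fun i j h => hB i j h.le)]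
  exact prod_eq_one fun i _ => by simp [hB i i le_rfl]

theorem sum_inv_apply_eq_sum_of_mulVec_eq_one {A : Matrix ι ι R} (hA : IsUnit A.det)
    {x : ι → R} (hx : A *ᵥ x = 1) : ∑ i, ∑ j, A⁻¹ i j = ∑ i, x i := by
  rw [← one_mulVec x, ← nonsing_inv_mul A hA, ← mulVec_mulVec, hx]
  simp [mulVec, dotProduct]

theorem one_add_mulVec_apply [LinearOrder ι] [LocallyFiniteOrderTop ι] (B : Matrix ι ι R)
    (hB : ∀ i j, j ≤ i → B i j = 0) (x : ι → R) (i : ι) :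
    ((1 + B) *ᵥ x) i = x i + ∑ j ∈ Ioi i, B i j * x j := by
  rw [add_mulVec, one_mulVec, Pi.add_apply, mulVec, dotProduct, ← filter_lt_eq_Ioi, sum_filter]
  congr 1
  refine sum_congr rfl fun j _ => ?_
  split_ifs with h
  · rfl
  · rw [hB i j (not_lt.mp h), zero_mul]

end Matrix

theorem Fin.sum_Ioi_sub_eq_sum_range {M : Type*} [AddCommMonoid M] {n : ℕ} (g : ℕ → M)
    (i : Fin n) : ∑ j ∈ Ioi i, g (n - 1 - j) = ∑ q ∈ range (n - 1 - i), g q := by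
  have := i.isLt
  have h := sum_map (Ioi i) Fin.valEmbedding (fun k => g (n - 1 - k))
  rw [Fin.map_valEmbedding_Ioi] at h
  simp only [Fin.valEmbedding_apply] at h
  rw [← h, ← Finset.Ico_add_one_left_eq_Ioo, sum_Ico_reflect _ _ (by omega), range_eq_Ico]
  congr 2 <;> omega

theorem Fin.sum_univ_sub_eq_sum_range {M : Type*} [AddCommMonoid M] {n : ℕ} (g : ℕ → M) :
    ∑ j : Fin n, g (n - 1 - j) = ∑ q ∈ range n, g q := by
  rw [Fin.sum_univ_eq_sum_range (fun j => g (n - 1 - j)), sum_range_reflect]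

theorem mul_mem_Icc_neg_negPart_posPart {b : ℝ} (hb : b ∈ Set.Icc 0 1) (x : ℝ) :
    b * x ∈ Set.Icc (-x⁻) x⁺ := by
  obtain ⟨hb0, hb1⟩ := hb
  rcases le_total 0 x with h | h
  · rw [negPart_eq_zero.mpr h, posPart_eq_self.mpr h, neg_zero]
    exact ⟨by positivity, by nlinarith⟩
  · rw [negPart_eq_neg.mpr h, posPart_eq_zero.mpr h, neg_neg]
    exact ⟨by nlinarith, by nlinarith⟩

theorem sum_mul_mem_Icc_neg_negPart_posPart {ι : Type*} {s : Finset ι} {b x : ι → ℝ}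
    (hb : ∀ i ∈ s, b i ∈ Set.Icc 0 1) :
    ∑ i ∈ s, b i * x i ∈ Set.Icc (-∑ i ∈ s, (x i)⁻) (∑ i ∈ s, (x i)⁺) := by
  rw [← sum_neg_distrib]
  exact ⟨sum_le_sum fun i hi => (mul_mem_Icc_neg_negPart_posPart (hb i hi) (x i)).1,
    sum_le_sum fun i hi => (mul_mem_Icc_neg_negPart_posPart (hb i hi) (x i)).2⟩

section SignedPartialSums

variable (y : ℕ → ℝ)

def posSum (p : ℕ) : ℝ := ∑ q ∈ range p, (y q)⁺

def negSum (p : ℕ) : ℝ := ∑ q ∈ range p, (y q)⁻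

variable {y}

theorem posSum_succ (p : ℕ) : posSum y (p + 1) = posSum y p + (y p)⁺ := sum_range_succ _ _

theorem negSum_succ (p : ℕ) : negSum y (p + 1) = negSum y p + (y p)⁻ := sum_range_succ _ _

theorem negSum_nonneg (p : ℕ) : 0 ≤ negSum y p := sum_nonneg fun q _ => negPart_nonneg (y q)

theorem sum_range_eq_posSum_sub_negSum (p : ℕ) :
    ∑ q ∈ range p, y q = posSum y p - negSum y p := by
  rw [posSum, negSum, ← sum_sub_distrib]
  simp only [posPart_sub_negPart]

theorem posSum_update_of_le {m p : ℕ} (hp : p ≤ m) (v : ℝ) :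
    posSum (update y m v) p = posSum y p :=
  sum_congr rfl fun q hq => by rw [update_of_ne (by simp at hq; omega)]

theorem negSum_update_of_le {m p : ℕ} (hp : p ≤ m) (v : ℝ) :
    negSum (update y m v) p = negSum y p :=
  sum_congr rfl fun q hq => by rw [update_of_ne (by simp at hq; omega)]

theorem posSum_negSum_le_fib {m : ℕ} (hm : 1 ≤ m)
    (hy : ∀ p < m, y p ∈ Set.Icc (1 - posSum y p) (1 + negSum y p)) :
    negSum y m ≤ fib m - 1 ∧ posSum y m + negSum y m ≤ fib (m + 1) ∧
      posSum y m ≤ 1 + fib m := by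
  induction m, hm using Nat.le_induction with
  | base =>
    obtain ⟨h0, h1⟩ := hy 0 one_pos
    simp only [posSum, negSum, range_zero, sum_empty] at h0 h1
    have hy0 : y 0 = 1 := by linarith
    simp [posSum, negSum, hy0]
  | succ m hm ih =>
    obtain ⟨hQ, hPQ, hP⟩ := ih fun p hp => hy p (by omega)
    obtain ⟨hlo, hhi⟩ := hy m (by omega)
    have hfib : (fib (m + 2) : ℝ) = fib m + fib (m + 1) := by exact_mod_cast fib_add_two
    have hmono : (fib m : ℝ) ≤ fib (m + 1) := by exact_mod_cast fib_le_fib_succ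
    rw [posSum_succ, negSum_succ]
    rcases le_total 0 (y m) with h | h
    · rw [posPart_eq_self.mpr h, negPart_eq_zero.mpr h]
      exact ⟨by linarith, by linarith, by linarith⟩
    · rw [posPart_eq_zero.mpr h, negPart_eq_neg.mpr h]
      exact ⟨by linarith, by linarith, by linarith⟩

theorem sum_range_mem_Icc_fib {n : ℕ} (hn : 2 ≤ n)
    (hy : ∀ p < n, y p ∈ Set.Icc (1 - posSum y p) (1 + negSum y p)) :
    ∑ p ∈ range n, y p ∈ Set.Icc (2 - (fib (n - 1) : ℝ)) (2 + fib (n - 1)) := by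
  obtain ⟨m, rfl⟩ : ∃ m, n = m + 1 := ⟨n - 1, by omega⟩
  obtain ⟨hQ, -, hP⟩ := posSum_negSum_le_fib (m := m) (by omega) fun p hp => hy p (by omega)
  obtain ⟨hlo, hhi⟩ := hy m (by omega)
  rw [sum_range_succ, sum_range_eq_posSum_sub_negSum, Nat.add_sub_cancel]
  constructor <;> linarith

end SignedPartialSums

theorem ite_mul_neg_eq_neg_negPart {a : ℝ} (ha : 0 < a) (b : ℝ) :
    (if a * b < 0 then b else 0) = -b⁻ := by
  rcases lt_or_ge b 0 with hb | hb
  · rw [if_pos (mul_neg_of_pos_of_neg ha hb), negPart_eq_neg.mpr hb.le, neg_neg]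
  · rw [if_neg (mul_nonneg ha.le hb).not_gt, negPart_eq_zero.mpr hb, neg_zero]

theorem ite_mul_neg_eq_posPart {a : ℝ} (ha : a < 0) (b : ℝ) :
    (if a * b < 0 then b else 0) = b⁺ := by
  rcases le_or_gt b 0 with hb | hb
  · rw [if_neg (mul_nonneg_of_nonpos_of_nonpos ha.le hb).not_gt, posPart_eq_zero.mpr hb]
  · rw [if_pos (mul_neg_of_neg_of_pos ha hb), posPart_eq_self.mpr hb.le]

def IsExtremal (y : ℕ → ℝ) (m : ℕ) : Prop :=
  ∀ p < m, (0 < y p ∧ y p = 1 + negSum y p) ∨ (y p < 0 ∧ y p = 1 - posSum y p)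

namespace IsExtremal

variable {y : ℕ → ℝ} {m : ℕ}

theorem update (hy : IsExtremal y m) {v : ℝ}
    (hv : (0 < v ∧ v = 1 + negSum y m) ∨ (v < 0 ∧ v = 1 - posSum y m)) :
    IsExtremal (update y m v) (m + 1) := by
  intro p hp
  rw [posSum_update_of_le (by omega), negSum_update_of_le (by omega)]
  rcases Nat.lt_succ_iff_lt_or_eq.mp hp with hp | rfl
  · rw [update_of_ne hp.ne]
    exact hy p hp
  · rwa [update_self]

theorem add_sum_opposite_sign_eq_one (hy : IsExtremal y m) {p : ℕ} (hp : p < m) :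
    y p + ∑ q ∈ range p, (if y p * y q < 0 then y q else 0) = 1 := by
  rcases hy p hp with ⟨hpos, hval⟩ | ⟨hneg, hval⟩
  · rw [sum_congr rfl fun q _ => ite_mul_neg_eq_neg_negPart hpos (y q), sum_neg_distrib,
      ← negSum]
    linarith
  · rw [sum_congr rfl fun q _ => ite_mul_neg_eq_posPart hneg (y q), ← posSum]
    linarith

end IsExtremal

theorem exists_isExtremal_fib {m : ℕ} (hm : 2 ≤ m) :
    (∃ y, IsExtremal y m ∧ posSum y m = 1 + fib m ∧ negSum y m = fib (m - 1) - 1) ∧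
    (∃ y, IsExtremal y m ∧ posSum y m = 1 + fib (m - 1) ∧ negSum y m = fib m - 1) := by
  induction m, hm using Nat.le_induction with
  | base =>
    have hy : IsExtremal (fun _ => 1) 2 := fun p _ => Or.inl ⟨one_pos, by simp [negSum]⟩
    have hP : posSum (fun _ => 1) 2 = 2 := by norm_num [posSum]
    have hQ : negSum (fun _ => 1) 2 = 0 := by simp [negSum]
    exact ⟨⟨_, hy, by norm_num [hP, hQ]⟩, ⟨_, hy, by norm_num [hP, hQ]⟩⟩
  | succ m hm ih =>
    obtain ⟨⟨yUp, hUp, hUpP, hUpQ⟩, ⟨yDown, hDown, hDownP, hDownQ⟩⟩ := ih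
    have hfib : (fib (m + 1) : ℝ) = fib (m - 1) + fib m := by
      rw [show m + 1 = m - 1 + 2 by omega, fib_add_two, show m - 1 + 1 = m by omega]
      push_cast; ring
    have hpos : (0 : ℝ) < fib m := by exact_mod_cast fib_pos.mpr (by omega)
    constructor
    · refine ⟨update yDown m (fib m), hDown.update (Or.inl ⟨hpos, by linarith⟩), ?_, ?_⟩
      · rw [posSum_succ, posSum_update_of_le le_rfl, update_self, posPart_eq_self.mpr hpos.le]
        linarith
      · rw [negSum_succ, negSum_update_of_le le_rfl, update_self, negPart_eq_zero.mpr hpos.le]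
        simp [hDownQ]
    · refine ⟨update yUp m (-fib m), hUp.update (Or.inr ⟨by linarith, by linarith⟩), ?_, ?_⟩
      · rw [posSum_succ, posSum_update_of_le le_rfl, update_self,
          posPart_eq_zero.mpr (by linarith)]
        simp [hUpP]
      · rw [negSum_succ, negSum_update_of_le le_rfl, update_self,
          negPart_eq_neg.mpr (by linarith)]
        linarith

theorem exists_isExtremal_sum_eq {n : ℕ} (hn : 3 ≤ n) :
    (∃ y, IsExtremal y n ∧ ∑ p ∈ range n, y p = 2 + fib (n - 1)) ∧
    (∃ y, IsExtremal y n ∧ ∑ p ∈ range n, y p = 2 - fib (n - 1)) := by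
  obtain ⟨m, rfl⟩ : ∃ m, n = m + 1 := ⟨n - 1, by omega⟩
  obtain ⟨⟨yUp, hUp, hUpP, -⟩, ⟨yDown, hDown, hDownP, hDownQ⟩⟩ :=
    exists_isExtremal_fib (m := m) (by omega)
  have hpos : (0 : ℝ) < fib (m - 1) := by exact_mod_cast fib_pos.mpr (by omega)
  simp only [sum_range_eq_posSum_sub_negSum, posSum_succ, negSum_succ, Nat.add_sub_cancel]
  constructor
  · have hv : 0 < 1 + negSum yUp m := by linarith [negSum_nonneg (y := yUp) m]
    refine ⟨_, hUp.update (Or.inl ⟨hv, rfl⟩), ?_⟩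
    rw [posSum_update_of_le le_rfl, negSum_update_of_le le_rfl, update_self,
      posPart_eq_self.mpr hv.le, negPart_eq_zero.mpr hv.le]
    linarith
  · have hv : 1 - posSum yDown m < 0 := by linarith
    refine ⟨_, hDown.update (Or.inr ⟨hv, rfl⟩), ?_⟩
    rw [posSum_update_of_le le_rfl, negSum_update_of_le le_rfl, update_self,
      posPart_eq_zero.mpr hv.le, negPart_eq_neg.mpr hv.le]
    linarith

section UnitriangularInverse

variable {n : ℕ}

theorem sum_inv_one_add_mem_Icc (hn : 2 ≤ n) (B : Matrix (Fin n) (Fin n) ℝ)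
    (hB0 : ∀ i j : Fin n, (j : ℕ) ≤ (i : ℕ) → B i j = 0)
    (hB1 : ∀ i j : Fin n, B i j ∈ Set.Icc (0 : ℝ) 1) :
    ∑ i, ∑ j, (1 + B)⁻¹ i j ∈ Set.Icc (2 - (fib (n - 1) : ℝ)) (2 + fib (n - 1)) := by
  have hdet : IsUnit (1 + B).det := by
    rw [det_one_add_eq_one_of_forall_le B hB0]; exact isUnit_one
  set x := (1 + B)⁻¹ *ᵥ 1
  have hx : (1 + B) *ᵥ x = 1 := by rw [mulVec_mulVec, mul_nonsing_inv _ hdet, one_mulVec]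
  set y : ℕ → ℝ := fun p => if h : p < n then x ⟨n - 1 - p, by omega⟩ else 0
  have hxy : x = fun j : Fin n => y (n - 1 - j) := by
    funext j
    simp only [y, dif_pos (show n - 1 - j < n by omega)]
    congr
    ext
    simp only; omega
  rw [sum_inv_apply_eq_sum_of_mulVec_eq_one hdet hx, hxy, Fin.sum_univ_sub_eq_sum_range]
  refine sum_range_mem_Icc_fib hn fun p hp => ?_
  set i : Fin n := ⟨n - 1 - p, by omega⟩
  have hip : n - 1 - (i : ℕ) = p := by simp only [i]; omega
  have hrow := congrFun hx i
  rw [one_add_mulVec_apply B hB0, hxy, Pi.one_apply] at hrow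
  beta_reduce at hrow
  rw [hip] at hrow
  have hsum := sum_mul_mem_Icc_neg_negPart_posPart (s := Ioi i)
    (x := fun j : Fin n => y (n - 1 - j)) fun j _ => hB1 i j
  rw [Fin.sum_Ioi_sub_eq_sum_range (fun q => (y q)⁻),
    Fin.sum_Ioi_sub_eq_sum_range (fun q => (y q)⁺), hip, ← posSum, ← negSum] at hsum
  constructor <;> linarith [hsum.1, hsum.2]

theorem exists_matrix_of_isExtremal {y : ℕ → ℝ} (hy : IsExtremal y n) :
    ∃ B : Matrix (Fin n) (Fin n) ℝ,
      (∀ i j : Fin n, (j : ℕ) ≤ (i : ℕ) → B i j = 0) ∧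
      (∀ i j : Fin n, B i j ∈ Set.Icc (0 : ℝ) 1) ∧
      ∑ i, ∑ j, (1 + B)⁻¹ i j = ∑ p ∈ range n, y p := by
  set x : Fin n → ℝ := fun j => y (n - 1 - j)
  set B : Matrix (Fin n) (Fin n) ℝ := fun i j => if i < j ∧ x i * x j < 0 then 1 else 0
  have hB0 : ∀ i j : Fin n, (j : ℕ) ≤ (i : ℕ) → B i j = 0 := fun i j h =>
    if_neg fun h' => absurd h'.1 (not_lt.mpr h)
  have hB1 : ∀ i j : Fin n, B i j ∈ Set.Icc (0 : ℝ) 1 := fun i j => by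
    simp only [B]; split_ifs <;> norm_num
  have hx : (1 + B) *ᵥ x = 1 := by
    funext i
    rw [one_add_mulVec_apply B hB0, Pi.one_apply]
    have hterm : ∀ j ∈ Ioi i, B i j * x j =
        if y (n - 1 - i) * y (n - 1 - j) < 0 then y (n - 1 - j) else 0 :=
      fun j hj => by simp [B, x, mem_Ioi.mp hj]
    rw [sum_congr rfl hterm,
      Fin.sum_Ioi_sub_eq_sum_range (fun q => if y (n - 1 - i) * y q < 0 then y q else 0)]
    exact hy.add_sum_opposite_sign_eq_one (by omega)
  have hdet : IsUnit (1 + B).det := by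
    rw [det_one_add_eq_one_of_forall_le B hB0]; exact isUnit_one
  refine ⟨B, hB0, hB1, ?_⟩
  rw [sum_inv_apply_eq_sum_of_mulVec_eq_one hdet hx, Fin.sum_univ_sub_eq_sum_range]

end UnitriangularInverse

/-- For n ≥ 3, over the set G_n of matrices I + B with B strictly upper
triangular with entries in [0,1], the max of S(A⁻¹) is 2 + F_{n-1} and the
min is 2 − F_{n-1}. -/
theorem stmt_13 (n : ℕ) (hn : 3 ≤ n) :
    IsGreatest {S : ℝ | ∃ B : Matrix (Fin n) (Fin n) ℝ,
        (∀ i j : Fin n, (j : ℕ) ≤ (i : ℕ) → B i j = 0) ∧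
        (∀ i j : Fin n, B i j ∈ Set.Icc (0 : ℝ) 1) ∧
        ∑ i : Fin n, ∑ j : Fin n, (1 + B)⁻¹ i j = S}
      (2 + (Nat.fib (n - 1) : ℝ)) ∧
    IsLeast {S : ℝ | ∃ B : Matrix (Fin n) (Fin n) ℝ,
        (∀ i j : Fin n, (j : ℕ) ≤ (i : ℕ) → B i j = 0) ∧
        (∀ i j : Fin n, B i j ∈ Set.Icc (0 : ℝ) 1) ∧
        ∑ i : Fin n, ∑ j : Fin n, (1 + B)⁻¹ i j = S}
      (2 - (Nat.fib (n - 1) : ℝ)) := by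
  obtain ⟨⟨yMax, hyMax, hsumMax⟩, ⟨yMin, hyMin, hsumMin⟩⟩ := exists_isExtremal_sum_eq hn
  obtain ⟨BMax, hMax0, hMax1, hMax⟩ := exists_matrix_of_isExtremal hyMax
  obtain ⟨BMin, hMin0, hMin1, hMin⟩ := exists_matrix_of_isExtremal hyMin
  refine ⟨⟨⟨BMax, hMax0, hMax1, hMax.trans hsumMax⟩, ?_⟩,
    ⟨⟨BMin, hMin0, hMin1, hMin.trans hsumMin⟩, ?_⟩⟩
  · rintro _ ⟨B, hB0, hB1, rfl⟩
    exact (sum_inv_one_add_mem_Icc (by omega) B hB0 hB1).2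
  · rintro _ ⟨B, hB0, hB1, rfl⟩
    exact (sum_inv_one_add_mem_Icc (by omega) B hB0 hB1).1
end

section
/- For every n ≥ 3 and A ∈ W_n (entries: 1 above the diagonal, 2 on the diagonal, 1 or 2 below), det(A) satisfies 3 − F_{n-1} ≤ det(A) ≤ 3 + F_{n-1}. -/
/-!
Write `A = B + 𝟙𝟙ᵀ`, so that `B` is lower unitriangular with strictly lower entries in `{0, 1}`.
By the matrix determinant lemma `det A = 1 + ∑ xᵢ` where `B x = 𝟙`, and forward substitution
gives `x_k = 1 - ∑_{j ∈ S_k} x_j` for some `S_k ⊆ {0, …, k - 1}`. Hence `x_k` lies between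
`1 - P_k` and `1 + N_k`, where `P_k` and `N_k` sum the positive and negative parts of
`x_0, …, x_{k-1}`. Induction on `k` gives `P_k ≤ F_k + 1`, `N_k ≤ F_k - 1` and
`P_k + N_k ≤ F_{k+1}`, and then `∑ x_j = P_{n-1} - N_{n-1} + x_{n-1}` lies within `2 ± F_{n-1}`.
-/

open Finset Matrix

section SumPosNegPart

variable (x : ℕ → ℤ)

def sumPosPart (k : ℕ) : ℤ := ∑ j ∈ range k, (x j)⁺

def sumNegPart (k : ℕ) : ℤ := ∑ j ∈ range k, (x j)⁻

variable {x}

lemma mem_Icc_of_add_sum_eq_one {k : ℕ} {S : Finset ℕ} (hS : S ⊆ range k)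
    (h : x k + ∑ j ∈ S, x j = 1) :
    x k ∈ Set.Icc (1 - sumPosPart x k) (1 + sumNegPart x k) := by
  have hpos : ∑ j ∈ S, x j ≤ sumPosPart x k :=
    (sum_le_sum fun j _ => le_posPart (x j)).trans
      (sum_le_sum_of_subset_of_nonneg hS fun j _ _ => posPart_nonneg (x j))
  have hneg : ∑ j ∈ S, -x j ≤ sumNegPart x k :=
    (sum_le_sum fun j _ => neg_le_negPart (x j)).trans
      (sum_le_sum_of_subset_of_nonneg hS fun j _ _ => negPart_nonneg (x j))
  rw [sum_neg_distrib] at hneg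
  constructor <;> linarith

lemma sumPosPart_sumNegPart_le_fib {m : ℕ}
    (hx : ∀ k < m, x k ∈ Set.Icc (1 - sumPosPart x k) (1 + sumNegPart x k))
    {k : ℕ} (hk : 1 ≤ k) (hkm : k ≤ m) :
    sumPosPart x k ≤ Nat.fib k + 1 ∧ sumNegPart x k ≤ Nat.fib k - 1 ∧
      sumPosPart x k + sumNegPart x k ≤ Nat.fib (k + 1) := by
  induction k, hk using Nat.le_induction with
  | base =>
    have hx0 : x 0 = 1 := le_antisymm (by simpa [sumNegPart] using (hx 0 hkm).2)
      (by simpa [sumPosPart] using (hx 0 hkm).1)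
    simp [sumPosPart, sumNegPart, hx0]
  | succ k hk ih =>
    obtain ⟨hP, hN, hPN⟩ := ih (by omega)
    obtain ⟨hlo, hhi⟩ := hx k (by omega)
    have hPs : sumPosPart x (k + 1) = sumPosPart x k + (x k)⁺ := sum_range_succ _ _
    have hNs : sumNegPart x (k + 1) = sumNegPart x k + (x k)⁻ := sum_range_succ _ _
    have hfib : (Nat.fib (k + 2) : ℤ) = Nat.fib k + Nat.fib (k + 1) := by
      exact_mod_cast Nat.fib_add_two
    have hmono : (Nat.fib k : ℤ) ≤ Nat.fib (k + 1) := by exact_mod_cast Nat.fib_le_fib_succ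
    rw [hPs, hNs, hfib]
    rcases le_total 0 (x k) with h | h
    · rw [posPart_eq_self.2 h, negPart_eq_zero.2 h]
      refine ⟨by linarith, by linarith, by linarith⟩
    · rw [posPart_eq_zero.2 h, negPart_eq_neg.2 h]
      refine ⟨by linarith, by linarith, by linarith⟩

theorem sum_range_succ_mem_Icc_fib {m : ℕ} (hm : 1 ≤ m)
    (hx : ∀ k < m + 1, x k ∈ Set.Icc (1 - sumPosPart x k) (1 + sumNegPart x k)) :
    ∑ j ∈ range (m + 1), x j ∈ Set.Icc (2 - Nat.fib m : ℤ) (2 + Nat.fib m) := by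
  obtain ⟨hP, hN, -⟩ := sumPosPart_sumNegPart_le_fib hx hm m.le_succ
  obtain ⟨hlo, hhi⟩ := hx m m.lt_succ_self
  have hsum : ∑ j ∈ range m, x j = sumPosPart x m - sumNegPart x m := by
    simp only [sumPosPart, sumNegPart, ← sum_sub_distrib, posPart_sub_negPart]
  rw [sum_range_succ, hsum]
  constructor <;> linarith

end SumPosNegPart

theorem Matrix.det_add_vecMulVec {m R : Type*} [Fintype m] [DecidableEq m] [CommRing R]
    {B : Matrix m m R} (hB : IsUnit B.det) (u v : m → R) :
    (B + vecMulVec u v).det = B.det * (1 + v ⬝ᵥ (B⁻¹ *ᵥ u)) := by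
  rw [vecMulVec_eq Unit, det_add_replicateCol_mul_replicateRow hB,
    det_unique (1 + replicateRow Unit v * B⁻¹ * replicateCol Unit u), dotProduct_mulVec]
  simp [Matrix.mul_apply, dotProduct, vecMul]

lemma det_sub_vecMulVec_one_eq_one {m R : Type*} [Fintype m] [LinearOrder m] [CommRing R]
    {A : Matrix m m R} (hupper : ∀ i j, i < j → A i j = 1) (hdiag : ∀ i, A i i = 2) :
    (A - vecMulVec 1 1).det = 1 := by
  rw [det_of_isLowerTriangular _ fun i j hij => ?_]
  · simp [hdiag, show (2 : R) - 1 = 1 by norm_num]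
  · simp [hupper i j hij]

lemma add_sum_filter_eq_one_of_mulVec_eq_one {m : Type*} [Fintype m] [LinearOrder m]
    {A : Matrix m m ℤ} (hupper : ∀ i j, i < j → A i j = 1) (hdiag : ∀ i, A i i = 2)
    (hlower : ∀ i j, j < i → A i j = 1 ∨ A i j = 2) {x : m → ℤ}
    (hx : (A - vecMulVec 1 1) *ᵥ x = 1) (i : m) :
    x i + ∑ j ∈ univ.filter (fun j => j < i ∧ A i j = 2), x j = 1 := by
  have hentry : ∀ j, (A - vecMulVec 1 1 : Matrix m m ℤ) i j * x j =
      (if i = j then x j else 0) + if j < i ∧ A i j = 2 then x j else 0 := by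
    intro j
    rcases lt_trichotomy j i with hji | rfl | hij
    · rcases hlower i j hji with h | h <;> simp [h, hji, hji.ne']
    · simp [hdiag]
    · simp [hupper i j hij, hij.ne, hij.not_gt]
  have hrow := congrFun hx i
  rwa [mulVec, dotProduct, sum_congr rfl fun j _ => hentry j, sum_add_distrib, sum_ite_eq,
    if_pos (mem_univ i), ← sum_filter] at hrow

lemma extend_val_mem_Icc {n : ℕ} {x : Fin n → ℤ} {S : Fin n → Finset (Fin n)}
    (hS : ∀ i, ∀ j ∈ S i, j < i) (hx : ∀ i, x i + ∑ j ∈ S i, x j = 1) {k : ℕ} (hk : k < n) :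
    Function.extend Fin.val x 0 k ∈ Set.Icc (1 - sumPosPart (Function.extend Fin.val x 0) k)
      (1 + sumNegPart (Function.extend Fin.val x 0) k) := by
  have hext (i : Fin n) : Function.extend Fin.val x 0 i = x i :=
    Fin.val_injective.extend_apply x 0 i
  refine mem_Icc_of_add_sum_eq_one (S := (S ⟨k, hk⟩).map Fin.valEmbedding) ?_ ?_
  · intro j hj
    obtain ⟨j, hjS, rfl⟩ := mem_map.1 hj
    exact mem_range.2 (hS _ j hjS)
  · rw [sum_map]
    convert hx ⟨k, hk⟩ using 2
    · exact hext ⟨k, hk⟩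
    · exact sum_congr rfl fun j _ => hext j

/-- For n ≥ 3 and A ∈ W_n, 3 − F_{n-1} ≤ det(A) ≤ 3 + F_{n-1}. -/
theorem stmt_18 (n : ℕ) (hn : 3 ≤ n) (A : Matrix (Fin n) (Fin n) ℤ)
    (hupper : ∀ i j : Fin n, (i : ℕ) < (j : ℕ) → A i j = 1)
    (hdiag : ∀ i : Fin n, A i i = 2)
    (hlower : ∀ i j : Fin n, (j : ℕ) < (i : ℕ) → A i j = 1 ∨ A i j = 2) :
    3 - (Nat.fib (n - 1) : ℤ) ≤ A.det ∧ A.det ≤ 3 + (Nat.fib (n - 1) : ℤ) := by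
  set B := A - vecMulVec 1 1
  have hB : IsUnit B.det := by rw [det_sub_vecMulVec_one_eq_one hupper hdiag]; exact isUnit_one
  set x := B⁻¹ *ᵥ 1
  have hdet : A.det = 1 + ∑ i, x i := by
    rw [← sub_add_cancel A (vecMulVec 1 1), det_add_vecMulVec hB,
      det_sub_vecMulVec_one_eq_one hupper hdiag, one_mul, one_dotProduct]
  have hx := add_sum_filter_eq_one_of_mulVec_eq_one hupper hdiag hlower
    (by rw [mulVec_mulVec, mul_nonsing_inv _ hB, one_mulVec] : B *ᵥ x = 1)
  have hsum : ∑ i, x i = ∑ k ∈ range n, Function.extend Fin.val x 0 k := by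
    rw [← Fin.sum_univ_eq_sum_range]
    simp [Fin.val_injective.extend_apply]
  obtain ⟨m, rfl⟩ : ∃ m, n = m + 1 := ⟨n - 1, by omega⟩
  obtain ⟨hlo, hhi⟩ := sum_range_succ_mem_Icc_fib (by omega)
    fun k hk => extend_val_mem_Icc (fun i j hj => (mem_filter.1 hj).2.1) hx hk
  rw [Nat.add_sub_cancel, hdet, hsum]
  constructor <;> linarith
end
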